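/- arXiv:0912.2442 — 7 statements merged into one kernel-verified Lean document; each statement's English description precedes it below -/
import Mathlib

section
/- (Jarník) Let Θ be an n×1 real matrix (column) with entries θ₁, …, θ_n, with ψ_Θ(t) > 0 for all t > 0, and suppose there exist indices i ≠ j such that 1, θ_i, θ_j are linearly independent over ℚ. If α(Θ) < 1, then β(Θ) ≥ α(Θ)² / (1 − α(Θ)). -/
open Filter
open scoped ENNReal

/-- Distance from a real number to the nearest integer. -/
noncomputable def nid (x : ℝ) : ℝ := |x - round x|

/-- Sup-norm height `M(x) = max_i |x_i|` of an integer vector. -/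
def heightM {m : ℕ} (x : Fin m → ℤ) : ℕ := Finset.univ.sup fun i => (x i).natAbs

/-- `ψ_Θ(t) = min { max_j ‖L_j(x)‖ : x ∈ ℤ^m, 0 < M(x) ≤ t }`, valued in `ℝ≥0∞`
(the infimum over the empty family is `⊤`). -/
noncomputable def psiFn {n m : ℕ} (Θ : Matrix (Fin n) (Fin m) ℝ) (t : ℝ) : ℝ≥0∞ :=
  ⨅ (x : Fin m → ℤ) (_ : x ≠ 0) (_ : (heightM x : ℝ) ≤ t),
    ENNReal.ofReal (⨆ j : Fin n, nid (∑ i, Θ j i * (x i : ℝ)))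

/-- The set `{γ > 0 : limsup_{t→∞} t^γ ψ_Θ(t) < ∞}`. -/
noncomputable def uniformExps {n m : ℕ} (Θ : Matrix (Fin n) (Fin m) ℝ) : Set ℝ :=
  {γ : ℝ | 0 < γ ∧ limsup (fun t : ℝ => ENNReal.ofReal (t ^ γ) * psiFn Θ t) atTop < ⊤}

/-- The set `{γ > 0 : liminf_{t→∞} t^γ ψ_Θ(t) < ∞}`. -/
noncomputable def individualExps {n m : ℕ} (Θ : Matrix (Fin n) (Fin m) ℝ) : Set ℝ :=
  {γ : ℝ | 0 < γ ∧ liminf (fun t : ℝ => ENNReal.ofReal (t ^ γ) * psiFn Θ t) atTop < ⊤}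

/-- The uniform Diophantine exponent `α(Θ)`, valued in `ℝ≥0∞`. -/
noncomputable def alphaExp {n m : ℕ} (Θ : Matrix (Fin n) (Fin m) ℝ) : ℝ≥0∞ :=
  sSup (ENNReal.ofReal '' uniformExps Θ)

/-- The individual Diophantine exponent `β(Θ)`, valued in `ℝ≥0∞`. -/
noncomputable def betaExp {n m : ℕ} (Θ : Matrix (Fin n) (Fin m) ℝ) : ℝ≥0∞ :=
  sSup (ENNReal.ofReal '' individualExps Θ)

/-!
Write `Q_k` for the successive record minima of `q ↦ max_s ‖q θ_s‖` and `ζ_k` for the record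
values. If `ψ_Θ(t) ≪ t^(-γ)`, then `ζ_k ≪ Q_(k+1)^(-γ)`. Since `1, θ_i, θ_j` are independent
over `ℚ`, the integer vectors `z_k = (Q_k, round (Q_k θ_i), round (Q_k θ_j))` span `ℚ³` from
every index on, so that beyond any index there are `j < μ` with `z_(j+1)` parallel to `z_μ` and
`z_j, z_(j+1), z_(μ+1)` independent. Their determinant is a nonzero integer, and bounding it by
the errors of the three vectors gives `Q_μ ≪ Q_(μ+1) ζ_j Q_(j+1) ζ_μ`, which together with
the uniform bound yields `ψ_Θ(Q_μ) ≤ ζ_μ ≪ Q_μ^(-γ²/(1-γ))` for arbitrarily large `μ`.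
-/

open Matrix

lemma nid_eq_abs_round_sub (x : ℝ) : nid x = |(round x : ℝ) - x| := abs_sub_comm _ _

lemma nid_natCast (q : ℕ) : nid q = 0 := by
  simp [nid]

lemma nid_neg (x : ℝ) : nid (-x) = nid x := by
  have h (y : ℝ) : nid (-y) ≤ nid y := calc
    nid (-y) ≤ |-y - ((-round y : ℤ) : ℝ)| := round_le _ _
    _ = nid y := by rw [nid, Int.cast_neg, ← abs_neg]; ring_nf
  exact le_antisymm (h x) (by simpa using h (-x))

section CrossProduct

variable {F : Type*} [Field F]

lemma exists_eq_smul_of_cross_eq_zero {v w : Fin 3 → F} (hv : v ≠ 0) (h : v ⨯₃ w = 0) :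
    ∃ t : F, w = t • v := by
  by_contra! hne
  exact crossProduct_ne_zero_iff_linearIndependent.2
    ((LinearIndependent.pair_iff' hv).2 fun t ht => hne t ht.symm) h

lemma cross_eq_zero_of_cross_eq_zero {a b v : Fin 3 → F} (hv : v ≠ 0) (ha : a ⨯₃ v = 0)
    (hb : b ⨯₃ v = 0) : a ⨯₃ b = 0 := by
  rw [← cross_anticomm, neg_eq_zero] at ha hb
  obtain ⟨s, rfl⟩ := exists_eq_smul_of_cross_eq_zero hv ha
  obtain ⟨t, rfl⟩ := exists_eq_smul_of_cross_eq_zero hv hb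
  simp

lemma eq_div_mul_of_cross_eq_zero {a b : Fin 3 → F} (hb : b 0 ≠ 0) (h : a ⨯₃ b = 0)
    (s : Fin 3) : a s = a 0 / b 0 * b s := by
  rw [← cross_anticomm, neg_eq_zero] at h
  obtain ⟨t, rfl⟩ := exists_eq_smul_of_cross_eq_zero (fun h0 => hb (congrFun h0 0)) h
  simp only [Pi.smul_apply, smul_eq_mul]
  field_simp

variable {v : ℕ → Fin 3 → F} {K : ℕ}

lemma exists_first_vector_off_plane (hv : ∀ k, v k ≠ 0)
    (hspan : ∀ u : Fin 3 → F, u ≠ 0 → ∃ k, K ≤ k ∧ u ⬝ᵥ v k ≠ 0) :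
    ∃ a b μ, K ≤ a ∧ a ≤ μ ∧ K ≤ b ∧ b ≤ μ ∧
      (∀ k, K ≤ k → k ≤ μ → v k ⬝ᵥ v a ⨯₃ v b = 0) ∧ v (μ + 1) ⬝ᵥ v a ⨯₃ v b ≠ 0 := by
  classical
  have hb : ∃ b, K ≤ b ∧ v K ⨯₃ v b ≠ 0 := by
    obtain ⟨u, hu0, hu⟩ := exists_ne_zero_dotProduct_eq_zero (v K)
    obtain ⟨k, hk, hne⟩ := hspan u hu0
    refine ⟨k, hk, fun h => hne ?_⟩
    obtain ⟨t, ht⟩ := exists_eq_smul_of_cross_eq_zero (hv K) h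
    rw [ht, dotProduct_smul, hu, smul_zero]
  set b := Nat.find hb
  obtain ⟨hKb, hw⟩ := Nat.find_spec hb
  have hplane_b : ∀ k, K ≤ k → k ≤ b → v k ⬝ᵥ v K ⨯₃ v b = 0 := by
    intro k hKk hkb
    rcases hkb.lt_or_eq with hkb | rfl
    · have hk : v K ⨯₃ v k = 0 := by
        by_contra h
        exact Nat.find_min hb hkb ⟨hKk, h⟩
      rw [triple_product_permutation, triple_product_permutation, ← cross_anticomm, hk,
        neg_zero, dotProduct_zero]
    · exact dot_cross_self _ _
  have hc : ∃ c, K ≤ c ∧ v c ⬝ᵥ v K ⨯₃ v b ≠ 0 := by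
    obtain ⟨c, hc, hne⟩ := hspan _ hw
    exact ⟨c, hc, by rwa [dotProduct_comm]⟩
  obtain ⟨hKc, hcw⟩ := Nat.find_spec hc
  have hbc : b < Nat.find hc := by
    by_contra! h
    exact hcw (hplane_b _ hKc h)
  refine ⟨K, b, Nat.find hc - 1, le_rfl, by omega, hKb, by omega, fun k hKk hk => ?_, ?_⟩
  · by_contra h
    exact Nat.find_min hc (by omega) ⟨hKk, h⟩
  · rwa [Nat.sub_add_cancel (by omega)]

lemma exists_cross_eq_zero_and_triple_product_ne_zero_of_plane (hv : ∀ k, v k ≠ 0) {a b μ : ℕ}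
    (ha : K ≤ a) (haμ : a ≤ μ) (hb : K ≤ b) (hbμ : b ≤ μ)
    (hplane : ∀ k, K ≤ k → k ≤ μ → v k ⬝ᵥ v a ⨯₃ v b = 0)
    (hμ : v (μ + 1) ⬝ᵥ v a ⨯₃ v b ≠ 0) :
    ∃ j, K ≤ j ∧ j < μ ∧ v (j + 1) ⨯₃ v μ = 0 ∧ v (μ + 1) ⬝ᵥ v j ⨯₃ v (j + 1) ≠ 0 := by
  classical
  let P (k : ℕ) : Prop := K ≤ k ∧ v k ⨯₃ v μ ≠ 0
  obtain ⟨k, hkμ, hk⟩ : ∃ k ≤ μ, K ≤ k ∧ v k ⨯₃ v μ ≠ 0 := by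
    by_contra! h
    exact hμ (by rw [cross_eq_zero_of_cross_eq_zero (hv μ) (h a haμ ha) (h b hbμ hb),
      dotProduct_zero])
  set j := Nat.findGreatest P μ
  obtain ⟨hKj, hjμ⟩ : P j := Nat.findGreatest_spec hkμ hk
  have hjltμ : j < μ :=
    (Nat.findGreatest_le μ).lt_of_ne fun h => hjμ (by rw [show j = μ from h, cross_self])
  have hj1 : v (j + 1) ⨯₃ v μ = 0 := by
    by_contra h
    exact Nat.findGreatest_is_greatest (P := P) (Nat.lt_succ_self j) hjltμ ⟨by omega, h⟩
  have hn : v j ⨯₃ v (j + 1) ≠ 0 := fun h =>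
    hjμ (cross_eq_zero_of_cross_eq_zero (hv (j + 1)) h (by rw [← cross_anticomm, hj1, neg_zero]))
  have hwn : v j ⨯₃ v (j + 1) ⨯₃ (v a ⨯₃ v b) = 0 := by
    rw [cross_cross_eq_smul_sub_smul, hplane j hKj hjltμ.le,
      hplane (j + 1) (by omega) hjltμ, zero_smul, zero_smul, sub_zero]
  obtain ⟨t, ht⟩ := exists_eq_smul_of_cross_eq_zero hn hwn
  refine ⟨j, hKj, hjltμ, hj1, fun h => hμ ?_⟩
  rw [ht, dotProduct_smul, h, smul_zero]

theorem exists_cross_eq_zero_and_triple_product_ne_zero (hv : ∀ k, v k ≠ 0)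
    (hspan : ∀ u : Fin 3 → F, u ≠ 0 → ∃ k, K ≤ k ∧ u ⬝ᵥ v k ≠ 0) :
    ∃ j μ, K ≤ j ∧ j < μ ∧ v (j + 1) ⨯₃ v μ = 0 ∧ v (μ + 1) ⬝ᵥ v j ⨯₃ v (j + 1) ≠ 0 := by
  obtain ⟨a, b, μ, ha, haμ, hb, hbμ, hplane, hμ⟩ := exists_first_vector_off_plane hv hspan
  obtain ⟨j, hj⟩ := exists_cross_eq_zero_and_triple_product_ne_zero_of_plane hv ha haμ hb hbμ
    hplane hμ
  exact ⟨j, μ, hj⟩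

end CrossProduct

lemma intCast_triple_product {R : Type*} [CommRing R] (a b c : Fin 3 → ℤ) :
    (fun s => (a s : R)) ⬝ᵥ (fun s => (b s : R)) ⨯₃ (fun s => (c s : R)) =
      ((a ⬝ᵥ b ⨯₃ c : ℤ) : R) := by
  simp [cross_apply, dotProduct, Fin.sum_univ_three]

lemma one_le_abs_triple_product {a b c : Fin 3 → ℤ}
    (h : (fun s => (a s : ℚ)) ⬝ᵥ (fun s => (b s : ℚ)) ⨯₃ (fun s => (c s : ℚ)) ≠ 0) :
    1 ≤ |(fun s => (a s : ℝ)) ⬝ᵥ (fun s => (b s : ℝ)) ⨯₃ (fun s => (c s : ℝ))| := by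
  rw [intCast_triple_product] at h ⊢
  exact_mod_cast Int.one_le_abs (by exact_mod_cast h)

section Approximation

variable {ϑ : Fin 3 → ℝ}

lemma triple_product_smul_add (hϑ : ϑ 0 = 1) (p q r : ℝ) {x y z : Fin 3 → ℝ} (hx : x 0 = 0)
    (hy : y 0 = 0) (hz : z 0 = 0) :
    (p • ϑ + x) ⬝ᵥ (q • ϑ + y) ⨯₃ (r • ϑ + z) =
      p * (y 1 * z 2 - y 2 * z 1) + q * (z 1 * x 2 - z 2 * x 1) + r * (x 1 * y 2 - x 2 * y 1) := by
  simp only [cross_apply, vec3_dotProduct, Pi.add_apply, Pi.smul_apply, smul_eq_mul, hϑ, hx, hy,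
    hz, cons_val_zero, cons_val_one, cons_val_two, head_cons, tail_cons]
  ring

lemma abs_mul_sub_mul_le {a b c d ε δ : ℝ} (ha : |a| ≤ ε) (hb : |b| ≤ δ) (hc : |c| ≤ ε)
    (hd : |d| ≤ δ) : |a * b - c * d| ≤ 2 * (ε * δ) := by
  have hε : 0 ≤ ε := (abs_nonneg a).trans ha
  calc |a * b - c * d| ≤ |a| * |b| + |c| * |d| := by
        rw [← abs_mul, ← abs_mul]; exact abs_sub _ _
    _ ≤ ε * δ + ε * δ := add_le_add (mul_le_mul ha hb (abs_nonneg _) hε)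
        (mul_le_mul hc hd (abs_nonneg _) hε)
    _ = 2 * (ε * δ) := by ring

lemma abs_triple_product_smul_add_le (hϑ : ϑ 0 = 1) {p q r εx εy εz : ℝ} (hp : 0 ≤ p)
    (hq : 0 ≤ q) (hr : 0 ≤ r) {x y z : Fin 3 → ℝ} (hx0 : x 0 = 0) (hy0 : y 0 = 0)
    (hz0 : z 0 = 0) (hx : ∀ s, |x s| ≤ εx) (hy : ∀ s, |y s| ≤ εy) (hz : ∀ s, |z s| ≤ εz) :
    |(p • ϑ + x) ⬝ᵥ (q • ϑ + y) ⨯₃ (r • ϑ + z)| ≤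
      2 * (p * (εy * εz) + q * (εz * εx) + r * (εx * εy)) := by
  rw [triple_product_smul_add hϑ p q r hx0 hy0 hz0]
  have key (s : ℝ) (hs : 0 ≤ s) {a b c d ε δ : ℝ} (ha : |a| ≤ ε) (hb : |b| ≤ δ) (hc : |c| ≤ ε)
      (hd : |d| ≤ δ) : |s * (a * b - c * d)| ≤ s * (2 * (ε * δ)) := by
    rw [abs_mul, abs_of_nonneg hs]
    exact mul_le_mul_of_nonneg_left (abs_mul_sub_mul_le ha hb hc hd) hs
  calc _ ≤ _ := abs_add_three _ _ _
    _ ≤ p * (2 * (εy * εz)) + q * (2 * (εz * εx)) + r * (2 * (εx * εy)) := by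
        gcongr
        · exact key p hp (hy 1) (hz 2) (hy 2) (hz 1)
        · exact key q hq (hz 1) (hx 2) (hz 2) (hx 1)
        · exact key r hr (hx 1) (hy 2) (hx 2) (hy 1)
    _ = _ := by ring

lemma sum_mul_ne_zero_of_linearIndependent (hϑ : LinearIndependent ℚ ϑ) {u : Fin 3 → ℚ}
    (hu : u ≠ 0) : ∑ s, (u s : ℝ) * ϑ s ≠ 0 := by
  intro h
  refine hu (funext (Fintype.linearIndependent_iff.1 hϑ u ?_))
  simpa only [Rat.smul_def] using h

lemma exists_dotProduct_ne_zero (hϑ : LinearIndependent ℚ ϑ) {z : ℕ → Fin 3 → ℤ}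
    {Q : ℕ → ℕ} {ζ : ℕ → ℝ} (hQ : ∀ k, 1 ≤ Q k)
    (hz : ∀ k s, |(z k s : ℝ) - ϑ s * Q k| ≤ ζ k) (hζ : ∀ ε > 0, ∀ᶠ k in atTop, ζ k < ε)
    {u : Fin 3 → ℚ} (hu : u ≠ 0) (K : ℕ) :
    ∃ k, K ≤ k ∧ u ⬝ᵥ (fun s => (z k s : ℚ)) ≠ 0 := by
  set L := ∑ s, (u s : ℝ) * ϑ s
  have hL : 0 < |L| := abs_pos.2 (sum_mul_ne_zero_of_linearIndependent hϑ hu)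
  set U := ∑ s, |(u s : ℝ)|
  obtain ⟨k, hk, hKk⟩ :=
    ((hζ _ (div_pos hL (by positivity : (0 : ℝ) < U + 1))).and (eventually_ge_atTop K)).exists
  refine ⟨k, hKk, fun h => ?_⟩
  have hζk : 0 ≤ ζ k := (abs_nonneg _).trans (hz k 0)
  have h0 : ∑ s, (u s : ℝ) * z k s = 0 := by
    simpa [dotProduct] using congrArg (Rat.cast : ℚ → ℝ) h
  have hQL : (Q k : ℝ) * L = ∑ s, (u s : ℝ) * (ϑ s * Q k - z k s) := by
    simp only [mul_sub, Finset.sum_sub_distrib, h0, sub_zero, L, Finset.mul_sum]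
    ring_nf
  have hLU : |L| ≤ U * ζ k := calc
    |L| ≤ Q k * |L| := le_mul_of_one_le_left (abs_nonneg _) (by exact_mod_cast hQ k)
    _ = |∑ s, (u s : ℝ) * (ϑ s * Q k - z k s)| := by rw [← hQL, abs_mul, Nat.abs_cast]
    _ ≤ ∑ s, |(u s : ℝ)| * ζ k := (Finset.abs_sum_le_sum_abs _ _).trans
      (Finset.sum_le_sum fun s _ => by
        rw [abs_mul, abs_sub_comm]
        exact mul_le_mul_of_nonneg_left (hz k s) (abs_nonneg _))
    _ = U * ζ k := (Finset.sum_mul _ _ _).symm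
  rw [lt_div_iff₀ (by positivity)] at hk
  nlinarith

lemma le_six_mul_of_one_le {q₀ q₁ x y ζ₀ ζ : ℝ} (hx : 0 < x) (hq₁ : 0 ≤ q₁) (hq₀ : q₀ ≤ y)
    (hxy : x ≤ y) (hζ : 0 ≤ ζ) (hζζ₀ : ζ ≤ ζ₀)
    (h : 1 ≤ 2 * (y * (ζ₀ * (q₁ / x * ζ)) + q₀ * (q₁ / x * ζ * ζ) + q₁ * (ζ * ζ₀))) :
    x ≤ 6 * y * (ζ₀ * q₁) * ζ := by
  set η := q₁ / x * ζ
  have hη : 0 ≤ η := by positivity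
  have hηx : η * x = q₁ * ζ := by simp only [η]; field_simp
  have h2 : q₀ * (η * ζ) ≤ y * (ζ₀ * η) := calc
    q₀ * (η * ζ) ≤ y * (η * ζ₀) :=
      mul_le_mul hq₀ (mul_le_mul_of_nonneg_left hζζ₀ hη) (by positivity) (hx.le.trans hxy)
    _ = y * (ζ₀ * η) := by ring
  have h3 : q₁ * (ζ * ζ₀) ≤ y * (ζ₀ * η) := calc
    q₁ * (ζ * ζ₀) = η * x * ζ₀ := by rw [hηx]; ring
    _ ≤ η * y * ζ₀ := by gcongr; exact hζ.trans hζζ₀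
    _ = y * (ζ₀ * η) := by ring
  calc x ≤ x * (6 * (y * (ζ₀ * η))) := le_mul_of_one_le_right hx.le (by linarith)
    _ = 6 * y * (ζ₀ * q₁) * ζ := by linear_combination (6 * y * ζ₀) * hηx

theorem exists_jarnik_inequality (hϑ : LinearIndependent ℚ ϑ) (hϑ0 : ϑ 0 = 1) {Q : ℕ → ℕ}
    {ζ : ℕ → ℝ} (hQ : Monotone Q) (hQ1 : ∀ k, 1 ≤ Q k) (hζ : Antitone ζ)
    (hζ0 : ∀ ε > 0, ∀ᶠ k in atTop, ζ k < ε) (hnid : ∀ k s, nid (ϑ s * Q k) ≤ ζ k) (K : ℕ) :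
    ∃ j μ, K ≤ j ∧ j < μ ∧ (Q μ : ℝ) ≤ 6 * Q (μ + 1) * (ζ j * Q (j + 1)) * ζ μ := by
  set z : ℕ → Fin 3 → ℤ := fun k s => round (ϑ s * Q k)
  set e : ℕ → Fin 3 → ℝ := fun k s => z k s - ϑ s * Q k
  have hz0 (k : ℕ) : z k 0 = Q k := by simp [z, hϑ0]
  have he0 (k : ℕ) : e k 0 = 0 := by simp [e, hz0, hϑ0]
  have he (k : ℕ) (s : Fin 3) : |e k s| ≤ ζ k := (nid_eq_abs_round_sub _).symm.trans_le (hnid k s)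
  have hze (k : ℕ) : (fun s => (z k s : ℝ)) = (Q k : ℝ) • ϑ + e k := by
    ext s; simp only [e, Pi.add_apply, Pi.smul_apply, smul_eq_mul]; ring
  have hQpos (k : ℕ) : (0 : ℝ) < Q k := by exact_mod_cast hQ1 k
  set v : ℕ → Fin 3 → ℚ := fun k s => z k s
  have hv0 (k : ℕ) : v k 0 ≠ 0 := by simpa [v, hz0] using Nat.one_le_iff_ne_zero.1 (hQ1 k)
  obtain ⟨j, μ, hKj, hjμ, hpar, hdet⟩ := exists_cross_eq_zero_and_triple_product_ne_zero
    (fun k h => hv0 k (congrFun h 0)) (fun u hu => exists_dotProduct_ne_zero hϑ hQ1 he hζ0 hu K)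
  -- As `z (j + 1)` is parallel to `z μ`, its error is `Q (j + 1) / Q μ` times that of `z μ`,
  -- which is much better than the a priori bound `ζ (j + 1)`.
  have hej (s : Fin 3) : |e (j + 1) s| ≤ (Q (j + 1) : ℝ) / Q μ * ζ μ := by
    have hs : (z (j + 1) s : ℝ) = (Q (j + 1) : ℝ) / Q μ * z μ s := by
      simpa [v, hz0] using congrArg (Rat.cast : ℚ → ℝ) (eq_div_mul_of_cross_eq_zero (hv0 μ) hpar s)
    have : e (j + 1) s = (Q (j + 1) : ℝ) / Q μ * e μ s := by
      simp only [e, hs]; field_simp [(hQpos μ).ne']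
    rw [this, abs_mul, abs_of_nonneg (by positivity)]
    exact mul_le_mul_of_nonneg_left (he μ s) (by positivity)
  have hbound := abs_triple_product_smul_add_le hϑ0 (hQpos (μ + 1)).le (hQpos j).le
    (hQpos (j + 1)).le (he0 (μ + 1)) (he0 j) (he0 (j + 1))
    (fun s => (he (μ + 1) s).trans (hζ μ.le_succ)) (he j) hej
  rw [← hze, ← hze, ← hze] at hbound
  refine ⟨j, μ, hKj, hjμ, le_six_mul_of_one_le (hQpos μ) (hQpos (j + 1)).le
    (by exact_mod_cast hQ (by omega)) (by exact_mod_cast hQ μ.le_succ)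
    ((abs_nonneg _).trans (he μ 0)) (hζ hjμ.le) ((one_le_abs_triple_product hdet).trans hbound)⟩

end Approximation

lemma rpow_le_mul_rpow_of_le_mul {γ x y p ζ' ζ C : ℝ} (hγ1 : γ < 1) (hp : 0 < p) (hpx : p ≤ x)
    (hy : 0 < y) (hζ : 0 ≤ ζ) (hζ' : ζ' * p ^ γ ≤ C) (hζy : ζ * y ^ γ ≤ C)
    (h : x ≤ 6 * y * (ζ' * p) * ζ) : x ^ γ ≤ 6 * C ^ 2 * y ^ (1 - γ) := by
  have hx : 0 < x := hp.trans_le hpx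
  have hC : 0 ≤ C := (mul_nonneg hζ (Real.rpow_nonneg hy.le γ)).trans hζy
  have hsplit (w : ℝ) (hw : 0 < w) : w = w ^ γ * w ^ (1 - γ) := by
    rw [← Real.rpow_add hw, add_sub_cancel, Real.rpow_one]
  have hζ'p : ζ' * p ≤ C * x ^ (1 - γ) := calc
    ζ' * p = ζ' * p ^ γ * p ^ (1 - γ) := by rw [mul_assoc, ← hsplit p hp]
    _ ≤ C * p ^ (1 - γ) := mul_le_mul_of_nonneg_right hζ' (by positivity)
    _ ≤ C * x ^ (1 - γ) := by gcongr
  have hxγ : x ^ γ * x ^ (1 - γ) ≤ 6 * C * y * ζ * x ^ (1 - γ) := calc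
    x ^ γ * x ^ (1 - γ) = x := (hsplit x hx).symm
    _ ≤ 6 * y * (C * x ^ (1 - γ)) * ζ := h.trans (by gcongr)
    _ = 6 * C * y * ζ * x ^ (1 - γ) := by ring
  calc x ^ γ ≤ 6 * C * y * ζ := le_of_mul_le_mul_right hxγ (by positivity)
    _ = 6 * C * y ^ (1 - γ) * (ζ * y ^ γ) := by nth_rw 1 [hsplit y hy]; ring
    _ ≤ 6 * C * y ^ (1 - γ) * C := by gcongr
    _ = 6 * C ^ 2 * y ^ (1 - γ) := by ring

lemma mul_rpow_le_of_rpow_le {γ x y ζ A C : ℝ} (hγ0 : 0 < γ) (hγ1 : γ < 1) (hx : 0 < x)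
    (hy : 0 < y) (hζ : 0 ≤ ζ) (hxy : x ^ γ ≤ A * y ^ (1 - γ)) (hζy : ζ * y ^ γ ≤ C) :
    ζ * x ^ (γ ^ 2 / (1 - γ)) ≤ A ^ (γ / (1 - γ)) * C := by
  have h1γ : 0 < 1 - γ := sub_pos.2 hγ1
  have hA : 0 ≤ A := nonneg_of_mul_nonneg_left ((Real.rpow_pos_of_pos hx γ).le.trans hxy)
    (Real.rpow_pos_of_pos hy _)
  have hxy' : x ^ (γ ^ 2 / (1 - γ)) ≤ A ^ (γ / (1 - γ)) * y ^ γ := calc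
    x ^ (γ ^ 2 / (1 - γ)) = (x ^ γ) ^ (γ / (1 - γ)) := by
      rw [← Real.rpow_mul hx.le]; ring_nf
    _ ≤ (A * y ^ (1 - γ)) ^ (γ / (1 - γ)) := by gcongr
    _ = A ^ (γ / (1 - γ)) * y ^ γ := by
      rw [Real.mul_rpow hA (by positivity), ← Real.rpow_mul hy.le, mul_div_cancel₀ _ h1γ.ne']
  calc ζ * x ^ (γ ^ 2 / (1 - γ)) ≤ ζ * (A ^ (γ / (1 - γ)) * y ^ γ) := by gcongr
    _ = A ^ (γ / (1 - γ)) * (ζ * y ^ γ) := by ring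
    _ ≤ A ^ (γ / (1 - γ)) * C := by gcongr

lemma sq_div_one_sub_le {x y : ℝ} (hx : 0 ≤ x) (hxy : x ≤ y) (hy : y < 1) :
    x ^ 2 / (1 - x) ≤ y ^ 2 / (1 - y) :=
  div_le_div₀ (sq_nonneg y) (pow_le_pow_left₀ hx hxy 2) (sub_pos.2 hy) (by linarith)

section Records

variable {α : Type*} [LinearOrder α] {r : ℕ → α}

structure IsRecordSeq (r : ℕ → α) (Q : ℕ → ℕ) : Prop where
  strictMono : StrictMono Q
  one_le : ∀ k, 1 ≤ Q k
  le_of_lt : ∀ k q, 1 ≤ q → q < Q (k + 1) → r (Q k) ≤ r q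

namespace IsRecordSeq

variable {Q : ℕ → ℕ} (hQ : IsRecordSeq r Q)
include hQ

lemma le_of_le {k q : ℕ} (hq : 1 ≤ q) (hqk : q ≤ k) : r (Q k) ≤ r q :=
  hQ.le_of_lt k q hq (hqk.trans_lt (hQ.strictMono.le_apply.trans_lt' (Nat.lt_succ_self k)))

lemma antitone : Antitone (r ∘ Q) := fun k l hkl =>
  hQ.le_of_lt l (Q k) (hQ.one_le k) (hQ.strictMono (Nat.lt_succ_of_le hkl))

lemma eventually_lt {ε : α} (hε : ∃ q, 1 ≤ q ∧ r q < ε) : ∀ᶠ k in atTop, r (Q k) < ε := by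
  obtain ⟨q, hq, hqε⟩ := hε
  exact eventually_atTop.2 ⟨q, fun k hk => (hQ.le_of_le hq hk).trans_lt hqε⟩

end IsRecordSeq

open Classical in
noncomputable def nextRecord (r : ℕ → α) (q : ℕ) : ℕ :=
  if h : ∃ m, q < m ∧ r m < r q then Nat.find h else q + 1

lemma lt_nextRecord (q : ℕ) : q < nextRecord r q := by
  unfold nextRecord
  split_ifs with h
  · exact (Nat.find_spec h).1
  · exact Nat.lt_succ_self q

lemma nextRecord_lt {q : ℕ} (h : ∃ m, q < m ∧ r m < r q) : r (nextRecord r q) < r q := by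
  rw [nextRecord, dif_pos h]
  exact (Nat.find_spec h).2

lemma le_of_lt_nextRecord {q m : ℕ} (hqm : q ≤ m) (hm : m < nextRecord r q) : r q ≤ r m := by
  rcases hqm.lt_or_eq with hqm | rfl
  · unfold nextRecord at hm
    split_ifs at hm with h
    · exact not_lt.1 fun hlt => Nat.find_min h hm ⟨hqm, hlt⟩
    · push Not at h
      exact h m hqm
  · exact le_rfl

lemma exists_isRecordSeq (hnext : ∀ q, 1 ≤ q → ∃ m, q < m ∧ r m < r q) :
    ∃ Q, IsRecordSeq r Q := by
  set Q : ℕ → ℕ := fun k => (nextRecord r)^[k] 1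
  have hQsucc (k : ℕ) : Q (k + 1) = nextRecord r (Q k) := Function.iterate_succ_apply' _ _ _
  have hmono : StrictMono Q := strictMono_nat_of_lt_succ fun k => hQsucc k ▸ lt_nextRecord _
  have hone (k : ℕ) : 1 ≤ Q k := (hmono.monotone (Nat.zero_le k) : Q 0 ≤ Q k)
  refine ⟨Q, hmono, hone, fun k => ?_⟩
  induction k with
  | zero =>
    intro q hq hqQ
    exact le_of_lt_nextRecord hq (hQsucc 0 ▸ hqQ)
  | succ k ih =>
    intro q hq hqQ
    rcases lt_or_ge q (Q (k + 1)) with hlt | hge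
    · refine le_trans ?_ (ih q hq hlt)
      rw [hQsucc]
      exact (nextRecord_lt (hnext _ (hone k))).le
    · exact le_of_lt_nextRecord hge (hQsucc (k + 1) ▸ hqQ)

end Records

lemma exists_gt_and_lt_of_pos {r : ℕ → ℝ} (hpos : ∀ q, 1 ≤ q → 0 < r q)
    (hsmall : ∀ ε > 0, ∃ q, 1 ≤ q ∧ r q < ε) {q : ℕ} (hq : 1 ≤ q) : ∃ m, q < m ∧ r m < r q := by
  have hne : (Finset.Icc 1 q).Nonempty := ⟨1, Finset.mem_Icc.2 ⟨le_rfl, hq⟩⟩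
  obtain ⟨m, hm, hmlt⟩ := hsmall _ ((Finset.lt_inf'_iff hne).2 fun p hp =>
    hpos p (Finset.mem_Icc.1 hp).1)
  have hqm : q < m := not_le.1 fun h =>
    (Finset.inf'_le r (Finset.mem_Icc.2 ⟨hm, h⟩)).not_gt hmlt
  exact ⟨m, hqm, hmlt.trans_le (Finset.inf'_le r (Finset.mem_Icc.2 ⟨hq, le_rfl⟩))⟩

section Exponents

variable {n m : ℕ} {Θ : Matrix (Fin n) (Fin m) ℝ}

lemma exists_eventually_le_of_mem_uniformExps {γ : ℝ} (hγ : γ ∈ uniformExps Θ) :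
    ∃ C : ℝ, 0 ≤ C ∧ ∀ᶠ t in atTop, ENNReal.ofReal (t ^ γ) * psiFn Θ t ≤ ENNReal.ofReal C := by
  obtain ⟨c, hc, hctop⟩ := exists_between hγ.2
  refine ⟨c.toReal, ENNReal.toReal_nonneg, (eventually_lt_of_limsup_lt hc).mono fun t ht => ?_⟩
  rw [ENNReal.ofReal_toReal hctop.ne]
  exact ht.le

lemma mem_individualExps_of_frequently_le {δ : ℝ} (hδ : 0 < δ) (C : ℝ)
    (h : ∃ᶠ t in atTop, ENNReal.ofReal (t ^ δ) * psiFn Θ t ≤ ENNReal.ofReal C) :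
    δ ∈ individualExps Θ :=
  ⟨hδ, (liminf_le_of_frequently_le' h).trans_lt ENNReal.ofReal_lt_top⟩

lemma ofReal_le_alphaExp {γ : ℝ} (hγ : γ ∈ uniformExps Θ) : ENNReal.ofReal γ ≤ alphaExp Θ :=
  le_sSup (Set.mem_image_of_mem _ hγ)

lemma ofReal_le_betaExp {δ : ℝ} (hδ : δ ∈ individualExps Θ) : ENNReal.ofReal δ ≤ betaExp Θ :=
  le_sSup (Set.mem_image_of_mem _ hδ)

lemma exists_mem_uniformExps_gt {x : ℝ} (hx : 0 ≤ x) (hxα : ENNReal.ofReal x < alphaExp Θ) :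
    ∃ γ ∈ uniformExps Θ, x < γ := by
  obtain ⟨_, ⟨γ, hγ, rfl⟩, hxγ⟩ := lt_sSup_iff.1 hxα
  exact ⟨γ, hγ, (ENNReal.ofReal_lt_ofReal_iff_of_nonneg hx).1 hxγ⟩

end Exponents

section Column

variable {n : ℕ} (Θ : Matrix (Fin n) (Fin 1) ℝ)

noncomputable def approxErr (q : ℕ) : ℝ := ⨆ s, nid (Θ s 0 * q)

lemma nid_le_approxErr (s : Fin n) (q : ℕ) : nid (Θ s 0 * q) ≤ approxErr Θ q :=
  le_ciSup (f := fun s => nid (Θ s 0 * q)) (Set.finite_range _).bddAbove s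

lemma iSup_nid_eq_approxErr (x : Fin 1 → ℤ) :
    ⨆ s, nid (∑ i, Θ s i * (x i : ℝ)) = approxErr Θ (x 0).natAbs := by
  refine iSup_congr fun s => ?_
  rw [Fin.sum_univ_one]
  rcases Int.natAbs_eq (x 0) with h | h <;> rw [h]
  · simp
  · rw [Int.natAbs_neg, Int.natAbs_natCast, Int.cast_neg, Int.cast_natCast, mul_neg, nid_neg]

lemma heightM_fin_one (x : Fin 1 → ℤ) : heightM x = (x 0).natAbs := by
  simp [heightM]

lemma psiFn_le_approxErr {t : ℝ} {q : ℕ} (hq : 1 ≤ q) (hqt : (q : ℝ) ≤ t) :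
    psiFn Θ t ≤ ENNReal.ofReal (approxErr Θ q) := by
  have hx : (fun _ : Fin 1 => (q : ℤ)) ≠ 0 := fun h => by
    have := congrFun h 0
    simp only [Pi.zero_apply, Nat.cast_eq_zero] at this
    omega
  unfold psiFn
  refine (iInf₂_le (fun _ => (q : ℤ)) hx).trans (iInf_le_of_le ?_ ?_)
  · simpa [heightM_fin_one] using hqt
  rw [iSup_nid_eq_approxErr]
  simp

lemma ofReal_le_psiFn {t c : ℝ} (hc : ∀ q : ℕ, 1 ≤ q → (q : ℝ) ≤ t → c ≤ approxErr Θ q) :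
    ENNReal.ofReal c ≤ psiFn Θ t := by
  refine le_iInf₂ fun x hx => le_iInf fun hxt => ?_
  rw [iSup_nid_eq_approxErr]
  refine ENNReal.ofReal_le_ofReal (hc _ ?_ (by simpa [heightM_fin_one] using hxt))
  exact Int.natAbs_pos.2 fun h0 => hx (funext fun i => by rwa [Subsingleton.elim i 0])

lemma approxErr_pos (hpos : ∀ t : ℝ, 0 < t → 0 < psiFn Θ t) {q : ℕ} (hq : 1 ≤ q) :
    0 < approxErr Θ q :=
  ENNReal.ofReal_pos.1 ((hpos q (by exact_mod_cast hq)).trans_le (psiFn_le_approxErr Θ hq le_rfl))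

lemma approxErr_nonneg (q : ℕ) : 0 ≤ approxErr Θ q :=
  Real.iSup_nonneg fun _ => abs_nonneg _

lemma ofReal_rpow_mul_psiFn_le {q : ℕ} (hq : 1 ≤ q) (δ : ℝ) :
    ENNReal.ofReal ((q : ℝ) ^ δ) * psiFn Θ q ≤ ENNReal.ofReal (approxErr Θ q * (q : ℝ) ^ δ) := by
  rw [mul_comm (approxErr Θ q), ENNReal.ofReal_mul (by positivity)]
  exact mul_le_mul_right (psiFn_le_approxErr Θ hq le_rfl) _

end Column

section ColumnExponents

variable {n : ℕ} (Θ : Matrix (Fin n) (Fin 1) ℝ) {γ : ℝ}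

lemma exists_mul_rpow_le_of_mem_uniformExps (hγ : γ ∈ uniformExps Θ) :
    ∃ C T : ℝ, 0 ≤ C ∧ ∀ t ≥ T, ∀ c, (∀ q : ℕ, 1 ≤ q → (q : ℝ) ≤ t → c ≤ approxErr Θ q) →
      c * t ^ γ ≤ C := by
  obtain ⟨C, hC, hev⟩ := exists_eventually_le_of_mem_uniformExps hγ
  obtain ⟨T, hT⟩ := eventually_atTop.1 (hev.and (eventually_ge_atTop 0))
  refine ⟨C, T, hC, fun t ht c hc => ?_⟩
  have h := (mul_le_mul_right (ofReal_le_psiFn Θ hc) _).trans (hT t ht).1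
  rw [← ENNReal.ofReal_mul (Real.rpow_nonneg (hT t ht).2 γ),
    ENNReal.ofReal_le_ofReal_iff hC] at h
  linarith

lemma exists_approxErr_lt (hγ : γ ∈ uniformExps Θ) {ε : ℝ} (hε : 0 < ε) :
    ∃ q, 1 ≤ q ∧ approxErr Θ q < ε := by
  obtain ⟨C, T, -, hCT⟩ := exists_mul_rpow_le_of_mem_uniformExps Θ hγ
  obtain ⟨t, htC, htT⟩ := (((tendsto_rpow_atTop hγ.1).const_mul_atTop hε).eventually_gt_atTop C
    |>.and (eventually_ge_atTop T)).exists
  by_contra! h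
  exact (hCT t htT ε fun q hq _ => h q hq).not_gt htC

lemma IsRecordSeq.exists_mul_rpow_le {Q : ℕ → ℕ} (hQ : IsRecordSeq (approxErr Θ) Q)
    (hγ : γ ∈ uniformExps Θ) : ∃ C, ∀ᶠ k in atTop, approxErr Θ (Q k) * (Q (k + 1) : ℝ) ^ γ ≤ C := by
  obtain ⟨C, T, hC, hCT⟩ := exists_mul_rpow_le_of_mem_uniformExps Θ hγ
  have hQ_tendsto : Tendsto (fun k => (Q (k + 1) : ℝ)) atTop atTop :=
    tendsto_natCast_atTop_atTop.comp ((tendsto_add_atTop_iff_nat 1).2 hQ.strictMono.tendsto_atTop)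
  refine ⟨2 ^ γ * C, (hQ_tendsto.eventually_ge_atTop (max T 1 + 1)).mono fun k hk => ?_⟩
  set x : ℝ := ((Q (k + 1) : ℕ) : ℝ)
  have hrec : approxErr Θ (Q k) * (x - 1) ^ γ ≤ C := hCT _ (by linarith [le_max_left T 1])
    _ fun q hq hqx => hQ.le_of_lt k q hq (Nat.cast_lt.1 (show (q : ℝ) < x by linarith))
  have hx : x ^ γ ≤ 2 ^ γ * (x - 1) ^ γ := by
    rw [← Real.mul_rpow zero_le_two (by linarith [le_max_right T 1])]
    exact Real.rpow_le_rpow (by positivity) (by linarith [le_max_right T 1]) hγ.1.le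
  calc approxErr Θ (Q k) * x ^ γ ≤ approxErr Θ (Q k) * (2 ^ γ * (x - 1) ^ γ) :=
        mul_le_mul_of_nonneg_left hx (approxErr_nonneg Θ _)
    _ = 2 ^ γ * (approxErr Θ (Q k) * (x - 1) ^ γ) := by ring
    _ ≤ 2 ^ γ * C := by gcongr

end ColumnExponents

theorem sq_div_one_sub_mem_individualExps {n : ℕ} {Θ : Matrix (Fin n) (Fin 1) ℝ}
    (hpos : ∀ t : ℝ, 0 < t → 0 < psiFn Θ t) {i j : Fin n}
    (hli : LinearIndependent ℚ ![(1 : ℝ), Θ i 0, Θ j 0]) {γ : ℝ} (hγ : γ ∈ uniformExps Θ)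
    (hγ1 : γ < 1) : γ ^ 2 / (1 - γ) ∈ individualExps Θ := by
  have hsmall : ∀ ε > 0, ∃ q, 1 ≤ q ∧ approxErr Θ q < ε := fun ε => exists_approxErr_lt Θ hγ
  obtain ⟨Q, hQ⟩ := exists_isRecordSeq fun q =>
    exists_gt_and_lt_of_pos (fun q => approxErr_pos Θ hpos) hsmall
  obtain ⟨C, hC⟩ := hQ.exists_mul_rpow_le Θ hγ
  obtain ⟨K, hK⟩ := eventually_atTop.1 hC
  have hnid (k : ℕ) (s : Fin 3) : nid (![1, Θ i 0, Θ j 0] s * Q k) ≤ approxErr Θ (Q k) := by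
    fin_cases s
    · simpa [nid_natCast] using approxErr_nonneg Θ (Q k)
    · exact nid_le_approxErr Θ i (Q k)
    · exact nid_le_approxErr Θ j (Q k)
  have hQpos (k : ℕ) : (0 : ℝ) < Q k := by exact_mod_cast hQ.one_le k
  refine mem_individualExps_of_frequently_le (div_pos (by positivity [hγ.1]) (sub_pos.2 hγ1))
    ((6 * C ^ 2) ^ (γ / (1 - γ)) * C) (frequently_atTop.2 fun T => ?_)
  obtain ⟨k, μ, hKk, hkμ, hjarnik⟩ := exists_jarnik_inequality hli rfl hQ.strictMono.monotone
    hQ.one_le hQ.antitone (fun ε hε => hQ.eventually_lt (hsmall ε hε)) hnid (max K ⌈T⌉₊)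
  have hζμ := approxErr_nonneg Θ (Q μ)
  have hgrowth : (Q μ : ℝ) ^ γ ≤ 6 * C ^ 2 * (Q (μ + 1) : ℝ) ^ (1 - γ) :=
    rpow_le_mul_rpow_of_le_mul hγ1 (hQpos (k + 1)) (by exact_mod_cast hQ.strictMono.monotone hkμ)
      (hQpos (μ + 1)) hζμ (hK k (by omega)) (hK μ (by omega)) hjarnik
  have hTμ : ⌈T⌉₊ ≤ Q μ := (show ⌈T⌉₊ ≤ μ by omega).trans hQ.strictMono.le_apply
  refine ⟨Q μ, (Nat.le_ceil T).trans (by exact_mod_cast hTμ),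
    (ofReal_rpow_mul_psiFn_le Θ (hQ.one_le μ) _).trans (ENNReal.ofReal_le_ofReal ?_)⟩
  exact mul_rpow_le_of_rpow_le hγ.1 hγ1 (hQpos μ) (hQpos (μ + 1)) hζμ hgrowth (hK μ (by omega))

/-- **Jarník's theorem, case (i) (`m = 1`).** For a column `Θ` of `n` real numbers with
`ψ_Θ(t) > 0` for all `t > 0`, if some two of the entries are linearly independent together
with `1` over `ℚ` and `α(Θ) < 1`, then `β(Θ) ≥ α(Θ)²/(1 − α(Θ))`. -/
theorem jarnik_m1 {n : ℕ} (Θ : Matrix (Fin n) (Fin 1) ℝ)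
    (hpos : ∀ t : ℝ, 0 < t → 0 < psiFn Θ t)
    (hli : ∃ i j : Fin n, i ≠ j ∧ LinearIndependent ℚ ![(1 : ℝ), Θ i 0, Θ j 0])
    (hlt : alphaExp Θ < 1) :
    ENNReal.ofReal ((alphaExp Θ).toReal ^ 2 / (1 - (alphaExp Θ).toReal)) ≤ betaExp Θ := by
  obtain ⟨i, j, -, hli⟩ := hli
  have hαtop : alphaExp Θ ≠ ⊤ := (hlt.trans ENNReal.one_lt_top).ne
  rcases (ENNReal.toReal_nonneg (a := alphaExp Θ)).eq_or_lt with hα0 | hα0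
  · rw [← hα0]
    simp
  set α := (alphaExp Θ).toReal
  have hα1 : α < 1 := by simpa using ENNReal.toReal_strict_mono ENNReal.one_ne_top hlt
  have hf : ContinuousAt (fun x : ℝ => ENNReal.ofReal (x ^ 2 / (1 - x))) α :=
    ENNReal.continuous_ofReal.continuousAt.comp
      (((continuous_pow 2).continuousAt).div (continuousAt_const.sub continuousAt_id) (by linarith))
  refine le_of_tendsto (hf.tendsto.mono_left nhdsWithin_le_nhds)
    (Filter.mem_of_superset (Ioo_mem_nhdsLT hα0) fun x ⟨hx0, hxα⟩ => ?_)
  obtain ⟨γ, hγ, hxγ⟩ := exists_mem_uniformExps_gt hx0.le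
    (by rwa [← ENNReal.ofReal_toReal hαtop, ENNReal.ofReal_lt_ofReal_iff hα0])
  have hγ1 : γ < 1 := ENNReal.ofReal_lt_one.1 ((ofReal_le_alphaExp hγ).trans_lt hlt)
  exact (ENNReal.ofReal_le_ofReal (sq_div_one_sub_le hx0.le hxγ.le hγ1)).trans
    (ofReal_le_betaExp (sq_div_one_sub_mem_individualExps hpos hli hγ hγ1))
end

section
/- The polynomial x³ − x² + 2x − 1 has exactly one real root α₀, and 1/3 < α₀ < 1. For every α with 1/3 < α < α₀ one has g₁(α) > max(1, α/(1−α)); in particular, on this interval α·g₁(α) > α²/(1−α). Moreover g₁(α) > 1 for all α with 1/3 < α < 1, and g₁(1/3) = g₁(1) = 1. -/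
/-!
`g₁(α)` is the positive root of `q(α) g² − α(1−α) g − α`, where `q(α) = 2α² − 2α + 1 > 0`;
since the constant term is negative, a number `t ≥ 0` lies below `g₁(α)` exactly when the
quadratic is negative at `t`. At `t = 1` the quadratic equals `(3α − 1)(α − 1)`, and at
`t = α/(1−α)` it equals `α (α³ − α² + 2α − 1) / (1 − α)²`, which is where the cubic comes from.
The cubic is strictly increasing, so its root `α₀` is unique and the cubic is negative below it.
-/

/-- `g₁(α) = (α(1−α) + √(α²(1−α)² + 4α(2α²−2α+1))) / (2(2α²−2α+1))`. -/
noncomputable def g1 (α : ℝ) : ℝ :=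
  (α * (1 - α) + Real.sqrt (α ^ 2 * (1 - α) ^ 2 + 4 * α * (2 * α ^ 2 - 2 * α + 1))) /
    (2 * (2 * α ^ 2 - 2 * α + 1))

noncomputable def posRoot (a b c : ℝ) : ℝ := (-b + √(b ^ 2 - 4 * a * c)) / (2 * a)

section PosRoot

variable {a b c t : ℝ}

lemma two_mul_sub_posRoot (ha : 0 < a) :
    2 * a * (t - posRoot a b c) = 2 * a * t + b - √(b ^ 2 - 4 * a * c) := by
  rw [posRoot]
  field_simp
  ring

lemma four_mul_quadratic_eq (ha : 0 < a) (hdisc : 0 ≤ b ^ 2 - 4 * a * c) :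
    4 * a * (a * t ^ 2 + b * t + c) =
      2 * a * (t - posRoot a b c) * (2 * a * t + b + √(b ^ 2 - 4 * a * c)) := by
  rw [two_mul_sub_posRoot ha]
  linear_combination Real.sq_sqrt hdisc

lemma two_mul_add_add_sqrt_discrim_pos (ha : 0 < a) (hc : c < 0) (ht : 0 ≤ t) :
    0 < 2 * a * t + b + √(b ^ 2 - 4 * a * c) := by
  have hb : |b| < √(b ^ 2 - 4 * a * c) := by
    rw [Real.lt_sqrt (abs_nonneg b), sq_abs]
    nlinarith
  nlinarith [neg_abs_le b, mul_nonneg ha.le ht]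

lemma lt_posRoot_iff (ha : 0 < a) (hc : c < 0) (ht : 0 ≤ t) :
    t < posRoot a b c ↔ a * t ^ 2 + b * t + c < 0 := by
  have he := two_mul_add_add_sqrt_discrim_pos (b := b) ha hc ht
  have hfac := four_mul_quadratic_eq (t := t) ha (by nlinarith [sq_nonneg b] : 0 ≤ b ^ 2 - 4 * a * c)
  have h2a : 0 < 2 * a := by positivity
  constructor
  · intro h
    have : 4 * a * (a * t ^ 2 + b * t + c) < 0 :=
      hfac ▸ mul_neg_of_neg_of_pos (mul_neg_of_pos_of_neg h2a (sub_neg.2 h)) he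
    exact neg_of_mul_neg_right this (by positivity)
  · intro h
    by_contra! h'
    have : 0 ≤ 4 * a * (a * t ^ 2 + b * t + c) :=
      hfac ▸ mul_nonneg (mul_nonneg h2a.le (sub_nonneg.2 h')) he.le
    linarith [mul_neg_of_pos_of_neg (by positivity : 0 < 4 * a) h]

lemma eq_posRoot_iff (ha : 0 < a) (hc : c < 0) (ht : 0 ≤ t) :
    t = posRoot a b c ↔ a * t ^ 2 + b * t + c = 0 := by
  have he := two_mul_add_add_sqrt_discrim_pos (b := b) ha hc ht
  have hfac := four_mul_quadratic_eq (t := t) ha (by nlinarith [sq_nonneg b] : 0 ≤ b ^ 2 - 4 * a * c)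
  rw [← sub_eq_zero, ← mul_eq_zero_iff_left (by positivity : 4 * a ≠ 0) (b := a * t ^ 2 + b * t + c),
    hfac, mul_assoc, mul_eq_zero_iff_left (by positivity), mul_eq_zero_iff_right he.ne']

end PosRoot

lemma two_sq_sub_two_mul_add_one_pos (α : ℝ) : 0 < 2 * α ^ 2 - 2 * α + 1 := by
  nlinarith [sq_nonneg (2 * α - 1)]

lemma g1_eq_posRoot (α : ℝ) :
    g1 α = posRoot (2 * α ^ 2 - 2 * α + 1) (-(α * (1 - α))) (-α) := by
  rw [g1, posRoot]
  ring_nf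

lemma lt_g1_iff {α t : ℝ} (hα : 0 < α) (ht : 0 ≤ t) :
    t < g1 α ↔ (2 * α ^ 2 - 2 * α + 1) * t ^ 2 + -(α * (1 - α)) * t + -α < 0 := by
  rw [g1_eq_posRoot, lt_posRoot_iff (two_sq_sub_two_mul_add_one_pos α) (by linarith) ht]

lemma g1_eq_iff {α t : ℝ} (hα : 0 < α) (ht : 0 ≤ t) :
    g1 α = t ↔ (2 * α ^ 2 - 2 * α + 1) * t ^ 2 + -(α * (1 - α)) * t + -α = 0 := by
  rw [g1_eq_posRoot, eq_comm, eq_posRoot_iff (two_sq_sub_two_mul_add_one_pos α) (by linarith) ht]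

lemma one_lt_g1 {α : ℝ} (h₁ : 1 / 3 < α) (h₂ : α < 1) : 1 < g1 α := by
  rw [lt_g1_iff (by linarith) zero_le_one]
  nlinarith [mul_pos (sub_pos.2 h₁) (sub_pos.2 h₂)]

lemma g1_one_third : g1 (1 / 3) = 1 := by
  rw [g1_eq_iff (by norm_num) zero_le_one]
  norm_num

lemma g1_one : g1 1 = 1 := by
  rw [g1_eq_iff one_pos zero_le_one]
  norm_num

lemma div_one_sub_lt_g1 {α : ℝ} (h₀ : 0 < α) (h₁ : α < 1)
    (hcubic : α ^ 3 - α ^ 2 + 2 * α - 1 < 0) : α / (1 - α) < g1 α := by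
  have h1α : 0 < 1 - α := sub_pos.2 h₁
  rw [lt_g1_iff h₀ (by positivity)]
  have hval : (2 * α ^ 2 - 2 * α + 1) * (α / (1 - α)) ^ 2 + -(α * (1 - α)) * (α / (1 - α)) + -α
      = α * (α ^ 3 - α ^ 2 + 2 * α - 1) / (1 - α) ^ 2 := by
    field_simp
    ring
  rw [hval]
  exact div_neg_of_neg_of_pos (mul_neg_of_pos_of_neg h₀ hcubic) (by positivity)

lemma cubic_strictMono : StrictMono fun x : ℝ => x ^ 3 - x ^ 2 + 2 * x - 1 := by
  intro x y hxy
  nlinarith [sq_nonneg (x + y), sq_nonneg (x - 1), sq_nonneg (y - 1), sq_nonneg (x - y)]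

lemma exists_cubic_root_mem_Ioo :
    ∃ α₀ ∈ Set.Ioo (1 / 3 : ℝ) 1, α₀ ^ 3 - α₀ ^ 2 + 2 * α₀ - 1 = 0 :=
  intermediate_value_Ioo (by norm_num) (by fun_prop) (by norm_num)

/-- The polynomial `x³ − x² + 2x − 1` has a unique real root `α₀`, with `1/3 < α₀ < 1`;
for `1/3 < α < α₀` one has `g₁(α) > max(1, α/(1−α))`, hence `α·g₁(α) > α²/(1−α)`;
moreover `g₁(α) > 1` for `1/3 < α < 1`, and `g₁(1/3) = g₁(1) = 1`. -/
theorem g1_properties :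
    ∃ α₀ : ℝ,
      (α₀ ^ 3 - α₀ ^ 2 + 2 * α₀ - 1 = 0) ∧
      (∀ x : ℝ, x ^ 3 - x ^ 2 + 2 * x - 1 = 0 → x = α₀) ∧
      1 / 3 < α₀ ∧ α₀ < 1 ∧
      (∀ α : ℝ, 1 / 3 < α → α < α₀ →
        max 1 (α / (1 - α)) < g1 α ∧ α ^ 2 / (1 - α) < α * g1 α) ∧
      (∀ α : ℝ, 1 / 3 < α → α < 1 → 1 < g1 α) ∧
      g1 (1 / 3) = 1 ∧ g1 1 = 1 := by
  obtain ⟨α₀, ⟨h₁, h₂⟩, hroot⟩ := exists_cubic_root_mem_Ioo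
  refine ⟨α₀, hroot, fun x hx => cubic_strictMono.injective (hx.trans hroot.symm), h₁, h₂,
    fun α hα hαα₀ => ?_, fun α => one_lt_g1, g1_one_third, g1_one⟩
  have hα₁ : α < 1 := hαα₀.trans h₂
  have hcubic : α ^ 3 - α ^ 2 + 2 * α - 1 < 0 := hroot ▸ cubic_strictMono hαα₀
  have hdiv := div_one_sub_lt_g1 (by linarith) hα₁ hcubic
  refine ⟨max_lt (one_lt_g1 hα hα₁) hdiv, ?_⟩
  rw [sq, mul_div_assoc]
  exact mul_lt_mul_of_pos_left hdiv (by linarith)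
end

section
/- Let θ₁, θ₂, θ₃ be real numbers. For i = 1, 2, 3, 4 let x_i ∈ ℤ and y_{1,i}, y_{2,i}, y_{3,i} ∈ ℤ, and set ζ_i = max_{1≤j≤3} |θ_j x_i + y_{j,i}|. Suppose ζ₁ ≥ ζ₂ ≥ ζ₃ ≥ ζ₄ and |x₁| ≤ |x₂| ≤ |x₃| ≤ |x₄|. Then the absolute value of the determinant of the 4×4 matrix whose i-th row is (y_{1,i}, y_{2,i}, y_{3,i}, x_i) is at most 24·ζ₁·ζ₂·ζ₃·|x₄|. -/
/-!
Adding `θ_j` times the last column to the `j`-th column does not change the determinant and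
replaces the entries `y_{j,i}` by `θ_j x_i + y_{j,i}`, which are bounded by `ζ_i`. Expanding along
the last column, each of the four terms is `± x_i` times a `3 × 3` minor whose rows are bounded by
three of the `ζ`'s, hence by `ζ₁ ζ₂ ζ₃`; the trivial Leibniz bound gives `3! ζ₁ ζ₂ ζ₃` for the
minor and `4 · 3! = 24` in total.
-/

open Matrix Finset

namespace Matrix

variable {R : Type*} [CommRing R]

theorem det_of_add_mul_col {n : Type*} [Fintype n] [DecidableEq n] (A : Matrix n n R) (k : n)
    (c : n → R) (hc : c k = 0) : (of fun i j => A i j + c j * A i k).det = A.det := by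
  have hmul : (of fun i j => A i j + c j * A i k) =
      A * (1 + replicateCol Unit (Pi.single k (1 : R)) * replicateRow Unit c) := by
    rw [Matrix.mul_add, Matrix.mul_one]
    ext i j
    simp [Matrix.mul_apply, Pi.single_apply, mul_comm]
  rw [hmul, det_mul, det_one_add_replicateCol_mul_replicateRow]
  simp [hc]

variable [LinearOrder R] [IsStrictOrderedRing R]

theorem abs_det_le_factorial_mul_prod {n : Type*} [Fintype n] [DecidableEq n]
    (A : Matrix n n R) (r : n → R) (hr : ∀ i j, |A i j| ≤ r i) :
    |A.det| ≤ (Fintype.card n).factorial * ∏ i, r i := by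
  calc |A.det| = |∑ σ : Equiv.Perm n, Equiv.Perm.sign σ • ∏ i, A (σ i) i| := by rw [det_apply]
    _ ≤ ∑ σ : Equiv.Perm n, |Equiv.Perm.sign σ • ∏ i, A (σ i) i| := abs_sum_le_sum_abs _ _
    _ = ∑ σ : Equiv.Perm n, ∏ i, |A (σ i) i| := by
        simp [Units.smul_def, abs_prod, abs_unit_intCast]
    _ ≤ ∑ σ : Equiv.Perm n, ∏ i, r (σ i) := by
        gcongr with σ _ i _
        exact hr _ _
    _ = (Fintype.card n).factorial * ∏ i, r i := by
        simp [Equiv.Perm.prod_comp, Fintype.card_perm]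

theorem _root_.Fin.castSucc_le_succAbove {n : ℕ} (p : Fin (n + 1)) (k : Fin n) :
    k.castSucc ≤ p.succAbove k := by
  unfold Fin.succAbove
  split_ifs
  exacts [le_rfl, Fin.castSucc_lt_succ.le]

theorem abs_det_le_of_antitone_row_bound {n : ℕ} (A : Matrix (Fin (n + 1)) (Fin (n + 1)) R)
    (ζ : Fin (n + 1) → R) (hζ : Antitone ζ) (X : R)
    (hA : ∀ i (k : Fin n), |A i k.castSucc| ≤ ζ i) (hX : ∀ i, |A i (Fin.last n)| ≤ X) :
    |A.det| ≤ (n + 1).factorial * (∏ k : Fin n, ζ k.castSucc) * X := by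
  have hminor : ∀ i : Fin (n + 1), |(A.submatrix i.succAbove Fin.castSucc).det| ≤
      n.factorial * ∏ k : Fin n, ζ k.castSucc := by
    intro i
    refine (abs_det_le_factorial_mul_prod _ (fun k => ζ (i.succAbove k))
      fun k l => hA _ l).trans ?_
    rw [Fintype.card_fin]
    exact mul_le_mul_of_nonneg_left (prod_le_prod (fun k _ => (abs_nonneg _).trans (hA _ k))
      fun k _ => hζ (i.castSucc_le_succAbove k)) (by positivity)
  rw [det_succ_column A (Fin.last n)]
  calc _ ≤ ∑ i : Fin (n + 1), |(-1) ^ (i + Fin.last n : ℕ) * A i (Fin.last n) *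
          (A.submatrix i.succAbove (Fin.last n).succAbove).det| := abs_sum_le_sum_abs _ _
    _ ≤ ∑ _i : Fin (n + 1), X * (n.factorial * ∏ k : Fin n, ζ k.castSucc) := by
        gcongr with i
        rw [abs_mul, abs_mul, abs_pow, abs_neg, abs_one, one_pow, one_mul, Fin.succAbove_last]
        exact mul_le_mul (hX i) (hminor i) (abs_nonneg _) ((abs_nonneg _).trans (hX i))
    _ = (n + 1).factorial * (∏ k : Fin n, ζ k.castSucc) * X := by
        simp [Nat.factorial_succ]
        ring

end Matrix

/-- The determinant estimate used in the proof of Theorem 2 (case `m = 1`, `n = 3`):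
if `ζᵢ = max_j |θ_j xᵢ + y_{j,i}|` with `ζ₁ ≥ ζ₂ ≥ ζ₃ ≥ ζ₄` and `|x₁| ≤ |x₂| ≤ |x₃| ≤ |x₄|`,
then the determinant of the matrix with rows `(y_{1,i}, y_{2,i}, y_{3,i}, xᵢ)` is at most
`24·ζ₁·ζ₂·ζ₃·|x₄|` in absolute value. -/
theorem det_estimate_m1_n3 (θ : Fin 3 → ℝ) (x : Fin 4 → ℤ) (y : Fin 4 → Fin 3 → ℤ)
    (ζ : Fin 4 → ℝ)
    (hζ : ∀ i, ζ i = ⨆ j : Fin 3, |θ j * (x i : ℝ) + (y i j : ℝ)|)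
    (hζ4 : ζ 3 ≤ ζ 2) (hζ3 : ζ 2 ≤ ζ 1) (hζ2 : ζ 1 ≤ ζ 0)
    (hx2 : |x 0| ≤ |x 1|) (hx3 : |x 1| ≤ |x 2|) (hx4 : |x 2| ≤ |x 3|) :
    |(Matrix.of fun i : Fin 4 =>
        ![(y i 0 : ℝ), (y i 1 : ℝ), (y i 2 : ℝ), (x i : ℝ)]).det| ≤
      24 * ζ 0 * ζ 1 * ζ 2 * |(x 3 : ℝ)| := by
  set A : Matrix (Fin 4) (Fin 4) ℝ := Matrix.of fun i =>
    ![(y i 0 : ℝ), (y i 1 : ℝ), (y i 2 : ℝ), (x i : ℝ)]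
  have hζ_anti : Antitone ζ := Fin.antitone_iff_succ_le.2 fun k => by fin_cases k <;> assumption
  have hx_mono : Monotone fun i => |x i| :=
    Fin.monotone_iff_le_succ.2 fun k => by fin_cases k <;> assumption
  rw [← A.det_of_add_mul_col 3 ![θ 0, θ 1, θ 2, 0] rfl]
  refine (Matrix.abs_det_le_of_antitone_row_bound _ ζ hζ_anti |(x 3 : ℝ)| ?_ ?_).trans_eq ?_
  · intro i k
    have hentry : θ k * (x i : ℝ) + y i k =
        A i k.castSucc + ![θ 0, θ 1, θ 2, 0] k.castSucc * A i 3 := by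
      fin_cases k <;> simp [A, add_comm]
    rw [Matrix.of_apply, ← hentry, hζ i]
    exact le_ciSup (f := fun j => |θ j * (x i : ℝ) + y i j|) (Set.finite_range _).bddAbove k
  · intro i
    simpa [A, ← Int.cast_abs] using hx_mono (Fin.le_last i)
  · have h24 : ((3 + 1).factorial : ℝ) = 24 := by norm_num [Nat.factorial]
    rw [Fin.prod_univ_three, h24]
    exact (by ring : 24 * (ζ 0 * ζ 1 * ζ 2) * |(x 3 : ℝ)| = 24 * ζ 0 * ζ 1 * ζ 2 * |(x 3 : ℝ)|)
end

section
/- Let θ¹, θ², θ³ be real numbers. For i = 1, 2, 3, 4 let x_{1,i}, x_{2,i}, x_{3,i} ∈ ℤ and y_i ∈ ℤ, and set ζ_i = |θ¹x_{1,i} + θ²x_{2,i} + θ³x_{3,i} + y_i| and M_i = max(|x_{1,i}|, |x_{2,i}|, |x_{3,i}|). Suppose ζ₁ ≥ ζ₂ ≥ ζ₃ ≥ ζ₄ and M₁ ≤ M₂ ≤ M₃ ≤ M₄. Then the absolute value of the determinant of the 4×4 matrix whose i-th row is (x_{1,i}, x_{2,i}, x_{3,i}, y_i) is at most 24·ζ₁·M₂·M₃·M₄.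 -/
/-!
Adding `θ j` times the `j`-th column to the last one does not change the determinant and turns
the last column into the values `Lᵢ` of the linear form, with `|Lᵢ| = ζᵢ ≤ ζ₁`. Expanding along
that column, each cofactor is a `3 × 3` determinant of integer rows omitting one row, so it is at
most `3! = 6` times the product of the three remaining row maxima, which by monotonicity of the
`Mᵢ` is at most `M₂ M₃ M₄`. Four such terms give `4 · 6 = 24`.
-/

open Finset Matrix Nat

lemma Fin.succAbove_le_succ {n : ℕ} (p : Fin (n + 1)) (i : Fin n) : p.succAbove i ≤ i.succ := by
  unfold Fin.succAbove
  split_ifs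
  exacts [Fin.castSucc_le_succ i, le_rfl]

theorem Matrix.abs_det_le_factorial_mul_prod_s16 {ι R : Type*} [Fintype ι] [DecidableEq ι]
    [CommRing R] [LinearOrder R] [IsStrictOrderedRing R]
    (A : Matrix ι ι R) (b : ι → R) (hb : ∀ i j, |A i j| ≤ b i) :
    |A.det| ≤ (Fintype.card ι)! * ∏ i, b i := by
  have hterm (σ : Equiv.Perm ι) : |Equiv.Perm.sign σ • ∏ i, A (σ i) i| ≤ ∏ i, b i := by
    have hsign : |Equiv.Perm.sign σ • ∏ i, A (σ i) i| = ∏ i, |A (σ i) i| := by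
      rcases Int.units_eq_one_or (Equiv.Perm.sign σ) with h | h <;> simp [h, abs_prod]
    calc |Equiv.Perm.sign σ • ∏ i, A (σ i) i| = ∏ i, |A (σ i) i| := hsign
      _ ≤ ∏ i, b (σ i) := prod_le_prod (fun _ _ => abs_nonneg _) fun i _ => hb (σ i) i
      _ = ∏ i, b i := Equiv.prod_comp σ b
  calc |A.det| ≤ ∑ σ : Equiv.Perm ι, |Equiv.Perm.sign σ • ∏ i, A (σ i) i| := by
        rw [det_apply]; exact abs_sum_le_sum_abs _ _
    _ ≤ ∑ _σ : Equiv.Perm ι, ∏ i, b i := sum_le_sum fun σ _ => hterm σ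
    _ = (Fintype.card ι)! * ∏ i, b i := by
        rw [sum_const, Finset.card_univ, Fintype.card_perm, nsmul_eq_mul]

theorem Matrix.det_eq_sum_mul_det_submatrix {R : Type*} [CommRing R] {n : ℕ}
    (A : Matrix (Fin (n + 1)) (Fin (n + 1)) R) (θ : Fin n → R) :
    A.det = ∑ i : Fin (n + 1), (-1) ^ ((i : ℕ) + n) *
      (∑ j, θ j * A i j.castSucc + A i (Fin.last n)) *
        (A.submatrix i.succAbove Fin.castSucc).det := by
  -- the column operation: the new last column is `∑ i, (Fin.snoc θ 1) i • A · i`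
  have h := det_updateCol_sum A (Fin.last n) (Fin.snoc θ 1)
  simp only [Fin.sum_univ_castSucc, Fin.snoc_castSucc, Fin.snoc_last, smul_eq_mul, one_mul] at h
  rw [← h, det_succ_column _ (Fin.last n)]
  refine sum_congr rfl fun i _ => ?_
  rw [Fin.succAbove_last, updateCol_self]
  congr 2
  ext k l
  rw [submatrix_apply, submatrix_apply]
  exact updateCol_ne (Fin.castSucc_ne_last l)

theorem Matrix.abs_det_le_of_antitone_of_monotone {R : Type*} [CommRing R] [LinearOrder R]
    [IsStrictOrderedRing R] {n : ℕ} (A : Matrix (Fin (n + 1)) (Fin (n + 1)) R) (θ : Fin n → R)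
    (M : Fin (n + 1) → R) (hM : Monotone M) (hAM : ∀ i (j : Fin n), |A i j.castSucc| ≤ M i)
    (hL : Antitone fun i => |∑ j, θ j * A i j.castSucc + A i (Fin.last n)|) :
    |A.det| ≤
      (n + 1)! * |∑ j, θ j * A 0 j.castSucc + A 0 (Fin.last n)| * ∏ k : Fin n, M k.succ := by
  have hminor (i : Fin (n + 1)) :
      |(A.submatrix i.succAbove Fin.castSucc).det| ≤ n ! * ∏ k : Fin n, M k.succ :=
    calc _ ≤ (Fintype.card (Fin n))! * ∏ k, M (i.succAbove k) :=
          abs_det_le_factorial_mul_prod_s16 _ _ fun k l => hAM _ l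
      _ ≤ n ! * ∏ k : Fin n, M k.succ := by
          rw [Fintype.card_fin]
          refine mul_le_mul_of_nonneg_left
            (prod_le_prod (fun k _ => (abs_nonneg _).trans (hAM _ k))
              fun k _ => hM (Fin.succAbove_le_succ i k)) (by positivity)
  rw [det_eq_sum_mul_det_submatrix A θ]
  calc _ ≤ ∑ i : Fin (n + 1), |∑ j, θ j * A 0 j.castSucc + A 0 (Fin.last n)| *
          (n ! * ∏ k : Fin n, M k.succ) := by
        refine (abs_sum_le_sum_abs _ _).trans (sum_le_sum fun i _ => ?_)
        rw [abs_mul, abs_mul, abs_pow, abs_neg, abs_one, one_pow, one_mul]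
        exact mul_le_mul (hL (Fin.zero_le i)) (hminor i) (abs_nonneg _) (abs_nonneg _)
    _ = _ := by
        rw [sum_const, Finset.card_univ, Fintype.card_fin, nsmul_eq_mul, factorial_succ]
        push_cast
        ring

/-- The determinant estimate used in the proof of Theorem 3 (case `m = 3`, `n = 1`):
if `ζᵢ = |θ¹x_{1,i} + θ²x_{2,i} + θ³x_{3,i} + yᵢ|` and `Mᵢ = max_j |x_{j,i}|`, with
`ζ₁ ≥ ζ₂ ≥ ζ₃ ≥ ζ₄` and `M₁ ≤ M₂ ≤ M₃ ≤ M₄`, then the determinant of the matrix with rows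
`(x_{1,i}, x_{2,i}, x_{3,i}, yᵢ)` is at most `24·ζ₁·M₂·M₃·M₄` in absolute value. -/
theorem det_estimate_m3_n1 (θ : Fin 3 → ℝ) (x : Fin 4 → Fin 3 → ℤ) (y : Fin 4 → ℤ)
    (ζ M : Fin 4 → ℝ)
    (hζ : ∀ i, ζ i = |(∑ j : Fin 3, θ j * (x i j : ℝ)) + (y i : ℝ)|)
    (hM : ∀ i, M i = ⨆ j : Fin 3, |(x i j : ℝ)|)
    (hζ4 : ζ 3 ≤ ζ 2) (hζ3 : ζ 2 ≤ ζ 1) (hζ2 : ζ 1 ≤ ζ 0)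
    (hM2 : M 0 ≤ M 1) (hM3 : M 1 ≤ M 2) (hM4 : M 2 ≤ M 3) :
    |(Matrix.of fun i : Fin 4 =>
        ![(x i 0 : ℝ), (x i 1 : ℝ), (x i 2 : ℝ), (y i : ℝ)]).det| ≤
      24 * ζ 0 * M 1 * M 2 * M 3 := by
  set A := Matrix.of fun i : Fin 4 => ![(x i 0 : ℝ), (x i 1 : ℝ), (x i 2 : ℝ), (y i : ℝ)]
  have hA (i : Fin 4) (j : Fin 3) : A i j.castSucc = x i j := by fin_cases j <;> rfl
  have hL (i : Fin 4) : |∑ j, θ j * A i j.castSucc + A i (Fin.last 3)| = ζ i := by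
    simp only [hA, hζ i]
    rfl
  have hxM (i : Fin 4) (j : Fin 3) : |A i j.castSucc| ≤ M i :=
    hA i j ▸ hM i ▸ le_ciSup (f := fun j => |(x i j : ℝ)|) (Set.finite_range _).bddAbove j
  have hMmono : Monotone M := Fin.monotone_iff_le_succ.2 fun i => by fin_cases i <;> assumption
  have hζanti : Antitone ζ := Fin.antitone_iff_succ_le.2 fun i => by fin_cases i <;> assumption
  have key := A.abs_det_le_of_antitone_of_monotone θ M hMmono hxM
    (by simpa only [hL] using hζanti)
  rw [hL, Fin.prod_univ_three] at key
  simpa [factorial, mul_assoc] using key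
end

section
/- Let θ₁¹, θ₁², θ₂¹, θ₂² be real numbers. For i = 1, 2, 3, 4 let x_{1,i}, x_{2,i}, y_{1,i}, y_{2,i} ∈ ℤ, and set ζ_i = max_{j=1,2} |θ_j¹ x_{1,i} + θ_j² x_{2,i} + y_{j,i}| and M_i = max(|x_{1,i}|, |x_{2,i}|). Suppose ζ₁ ≥ ζ₂ ≥ ζ₃ ≥ ζ₄ and M₁ ≤ M₂ ≤ M₃ ≤ M₄. Then the absolute value of the determinant of the 4×4 matrix whose i-th row is (x_{1,i}, x_{2,i}, y_{1,i}, y_{2,i}) is at most 24·ζ₁·ζ₂·M₃·M₄. -/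
/-! Adding `θ_j¹` times the first column and `θ_j²` times the second to the column of `y_j` is a
unimodular column operation; it turns the last two columns into the values of the linear forms,
bounded by `ζᵢ` in row `i`, while the first two columns are bounded by `Mᵢ`. Each of the 24 terms
of the Leibniz expansion takes its first two factors from distinct rows and its last two from
distinct rows, so by the monotonicity of `M` and `ζ` it is at most `M₃M₄ζ₁ζ₂`. -/

open Matrix Finset

lemma Antitone.apply_mul_apply_le_zero_one {R : Type*} [CommSemiring R] [PartialOrder R]
    [IsOrderedRing R] {n : ℕ} {f : Fin (n + 2) → R} (hf : Antitone f) (hf0 : ∀ i, 0 ≤ f i)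
    {a b : Fin (n + 2)} (hab : a ≠ b) : f a * f b ≤ f 0 * f 1 := by
  wlog hlt : a < b generalizing a b
  · rw [mul_comm]; exact this hab.symm (hab.lt_or_gt.resolve_left hlt)
  have hb : 1 ≤ b := Fin.one_le_of_ne_zero (Fin.ne_zero_of_lt hlt)
  exact mul_le_mul (hf (Fin.zero_le a)) (hf hb) (hf0 b) (hf0 0)

lemma Monotone.apply_mul_apply_le_last_two {R : Type*} [CommSemiring R] [PartialOrder R]
    [IsOrderedRing R] {n : ℕ} {f : Fin (n + 2) → R} (hf : Monotone f) (hf0 : ∀ i, 0 ≤ f i)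
    {a b : Fin (n + 2)} (hab : a ≠ b) :
    f a * f b ≤ f (Fin.last n).castSucc * f (Fin.last (n + 1)) := by
  have := (hf.comp_antitone Fin.rev_anti).apply_mul_apply_le_zero_one
    (fun _ => hf0 _) (a := a.rev) (b := b.rev) (by simpa using hab)
  have hrev : Fin.rev (1 : Fin (n + 2)) = (Fin.last n).castSucc := by ext; simp [Fin.val_rev]
  simpa [hrev, mul_comm] using this

lemma Matrix.det_mul_of_isUpperTriangular_of_diag_eq_one {n R : Type*} [Fintype n] [DecidableEq n]
    [LinearOrder n] [CommRing R] (A U : Matrix n n R) (hU : U.IsUpperTriangular)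
    (hdiag : ∀ i, U i i = 1) : (A * U).det = A.det := by
  simp [det_mul, det_of_isUpperTriangular hU, hdiag]

lemma Matrix.abs_det_le_of_abs_prod_le {n R : Type*} [Fintype n] [DecidableEq n] [CommRing R]
    [LinearOrder R] [IsStrictOrderedRing R] (A : Matrix n n R) (C : R)
    (h : ∀ σ : Equiv.Perm n, |∏ i, A (σ i) i| ≤ C) :
    |A.det| ≤ (Fintype.card n).factorial * C := by
  calc |A.det| ≤ ∑ σ : Equiv.Perm n, |(Equiv.Perm.sign σ : R) * ∏ i, A (σ i) i| := by
        rw [det_apply']; exact abs_sum_le_sum_abs _ _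
    _ ≤ ∑ _σ : Equiv.Perm n, C := by
        gcongr with σ; rw [abs_mul, abs_unit_intCast, one_mul]; exact h σ
    _ = (Fintype.card n).factorial * C := by simp [Fintype.card_perm]

lemma abs_prod_perm_le_of_col_bounds {R : Type*} [CommRing R] [LinearOrder R]
    [IsStrictOrderedRing R] (A : Matrix (Fin 4) (Fin 4) R) {M ζ : Fin 4 → R}
    (hM : Monotone M) (hζ : Antitone ζ) (h0 : ∀ i, |A i 0| ≤ M i) (h1 : ∀ i, |A i 1| ≤ M i)
    (h2 : ∀ i, |A i 2| ≤ ζ i) (h3 : ∀ i, |A i 3| ≤ ζ i) (σ : Equiv.Perm (Fin 4)) :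
    |∏ i, A (σ i) i| ≤ ζ 0 * ζ 1 * (M 2 * M 3) := by
  have hM0 i : 0 ≤ M i := (abs_nonneg _).trans (h0 i)
  have hζ0 i : 0 ≤ ζ i := (abs_nonneg _).trans (h2 i)
  have hMσ : M (σ 0) * M (σ 1) ≤ M 2 * M 3 :=
    hM.apply_mul_apply_le_last_two hM0 (σ.injective.ne (by decide))
  have hζσ : ζ (σ 2) * ζ (σ 3) ≤ ζ 0 * ζ 1 :=
    hζ.apply_mul_apply_le_zero_one hζ0 (σ.injective.ne (by decide))
  rw [abs_prod, Fin.prod_univ_four]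
  calc |A (σ 0) 0| * |A (σ 1) 1| * |A (σ 2) 2| * |A (σ 3) 3|
      ≤ M (σ 0) * M (σ 1) * (ζ (σ 2) * ζ (σ 3)) := by
        rw [mul_assoc]
        exact mul_le_mul (mul_le_mul (h0 _) (h1 _) (abs_nonneg _) (hM0 _))
          (mul_le_mul (h2 _) (h3 _) (abs_nonneg _) (hζ0 _)) (by positivity)
          (mul_nonneg (hM0 _) (hM0 _))
    _ ≤ M 2 * M 3 * (ζ 0 * ζ 1) :=
        mul_le_mul hMσ hζσ (mul_nonneg (hζ0 _) (hζ0 _)) (mul_nonneg (hM0 _) (hM0 _))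
    _ = ζ 0 * ζ 1 * (M 2 * M 3) := mul_comm _ _

lemma abs_det_le_of_col_bounds {R : Type*} [CommRing R] [LinearOrder R]
    [IsStrictOrderedRing R] (A : Matrix (Fin 4) (Fin 4) R) {M ζ : Fin 4 → R}
    (hM : Monotone M) (hζ : Antitone ζ) (h0 : ∀ i, |A i 0| ≤ M i) (h1 : ∀ i, |A i 1| ≤ M i)
    (h2 : ∀ i, |A i 2| ≤ ζ i) (h3 : ∀ i, |A i 3| ≤ ζ i) :
    |A.det| ≤ 24 * ζ 0 * ζ 1 * M 2 * M 3 := by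
  calc |A.det| ≤ (Fintype.card (Fin 4)).factorial * (ζ 0 * ζ 1 * (M 2 * M 3)) :=
        abs_det_le_of_abs_prod_le A _ (abs_prod_perm_le_of_col_bounds A hM hζ h0 h1 h2 h3)
    _ = 24 * ζ 0 * ζ 1 * M 2 * M 3 := by simp [Nat.factorial]; ring

lemma det_of_rows_eq_det_of_rows_add_linearForms {R : Type*} [CommRing R]
    (θ : Fin 2 → Fin 2 → R) (x y : Fin 4 → Fin 2 → R) :
    (of fun i => ![x i 0, x i 1, y i 0, y i 1]).det =
      (of fun i => ![x i 0, x i 1, θ 0 0 * x i 0 + θ 0 1 * x i 1 + y i 0,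
        θ 1 0 * x i 0 + θ 1 1 * x i 1 + y i 1]).det := by
  let U : Matrix (Fin 4) (Fin 4) R :=
    !![1, 0, θ 0 0, θ 1 0; 0, 1, θ 0 1, θ 1 1; 0, 0, 1, 0; 0, 0, 0, 1]
  have hU : U.IsUpperTriangular := by
    intro i j hij
    fin_cases i <;> fin_cases j <;> first | exact absurd hij (by decide) | rfl
  have hdiag : ∀ i, U i i = 1 := by
    intro i
    fin_cases i <;> rfl
  rw [← det_mul_of_isUpperTriangular_of_diag_eq_one _ U hU hdiag]
  congr 1
  ext i c
  fin_cases c <;> simp [U, mul_apply, Fin.sum_univ_four] <;> ring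

/-- The determinant estimate used in the proof of Theorem 4 (case `m = n = 2`):
if `ζᵢ = max_j |θ_j¹x_{1,i} + θ_j²x_{2,i} + y_{j,i}|` and `Mᵢ = max(|x_{1,i}|, |x_{2,i}|)`,
with `ζ₁ ≥ ζ₂ ≥ ζ₃ ≥ ζ₄` and `M₁ ≤ M₂ ≤ M₃ ≤ M₄`, then the determinant of the matrix with
rows `(x_{1,i}, x_{2,i}, y_{1,i}, y_{2,i})` is at most `24·ζ₁·ζ₂·M₃·M₄` in absolute value. -/
theorem det_estimate_m2_n2 (θ : Fin 2 → Fin 2 → ℝ)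
    (x : Fin 4 → Fin 2 → ℤ) (y : Fin 4 → Fin 2 → ℤ) (ζ M : Fin 4 → ℝ)
    (hζ : ∀ i, ζ i =
      ⨆ j : Fin 2, |θ j 0 * (x i 0 : ℝ) + θ j 1 * (x i 1 : ℝ) + (y i j : ℝ)|)
    (hM : ∀ i, M i = max |(x i 0 : ℝ)| |(x i 1 : ℝ)|)
    (hζ4 : ζ 3 ≤ ζ 2) (hζ3 : ζ 2 ≤ ζ 1) (hζ2 : ζ 1 ≤ ζ 0)
    (hM2 : M 0 ≤ M 1) (hM3 : M 1 ≤ M 2) (hM4 : M 2 ≤ M 3) :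
    |(Matrix.of fun i : Fin 4 =>
        ![(x i 0 : ℝ), (x i 1 : ℝ), (y i 0 : ℝ), (y i 1 : ℝ)]).det| ≤
      24 * ζ 0 * ζ 1 * M 2 * M 3 := by
  have hMmono : Monotone M := Fin.monotone_iff_le_succ.2 fun i => by
    fin_cases i <;> assumption
  have hζanti : Antitone ζ := Fin.antitone_iff_succ_le.2 fun i => by
    fin_cases i <;> assumption
  have hform (i : Fin 4) (j : Fin 2) :
      |θ j 0 * (x i 0 : ℝ) + θ j 1 * (x i 1 : ℝ) + (y i j : ℝ)| ≤ ζ i := by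
    rw [hζ i]
    exact le_ciSup (f := fun j => |θ j 0 * (x i 0 : ℝ) + θ j 1 * (x i 1 : ℝ) + (y i j : ℝ)|)
      (Finite.bddAbove_range _) j
  rw [det_of_rows_eq_det_of_rows_add_linearForms θ (fun i k => (x i k : ℝ))
    (fun i j => (y i j : ℝ))]
  apply abs_det_le_of_col_bounds _ hMmono hζanti <;> intro i
  · exact hM i ▸ le_max_left _ _
  · exact hM i ▸ le_max_right _ _
  · exact hform i 0
  · exact hform i 1
end

section
/- (Lemma 1) Let θ₁, θ₂, θ₃ be real numbers such that 1, θ₁, θ₂, θ₃ are linearly independent over ℚ. Then there exist constants C ≥ c > 0, depending only on (θ₁, θ₂, θ₃), with the following property. Whenever a ≤ b are indices such that all the vectors z_ν, for a ≤ ν ≤ b, lie in a common two-dimensional linear subspace π of ℝ⁴, one has c·ζ_{ν₂}·M_{ν₂+1} ≤ ζ_{ν₁}·M_{ν₁+1} ≤ C·ζ_{ν₂}·M_{ν₂+1} for all ν₁, ν₂ with a ≤ ν₁, ν₂ ≤ b − 1. -/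
lemma nid_le_abs_add_int (x : ℝ) (k : ℤ) : nid x ≤ |x + k| := by
  simpa [nid] using round_le x (-k)

namespace SimultaneousApprox

open Module Submodule

lemma mem_span_pair_of_finrank_eq_two {K V : Type*} [DivisionRing K] [AddCommGroup V]
    [Module K V] {π : Submodule K V} (hπ : finrank K π = 2) {u v w : V}
    (huv : LinearIndependent K ![u, v]) (hu : u ∈ π) (hv : v ∈ π) (hw : w ∈ π) :
    w ∈ span K {u, v} := by
  have : FiniteDimensional K π := Module.finite_of_finrank_pos (by omega)
  have hle : span K {u, v} ≤ π := span_le.2 (Set.insert_subset_iff.2 ⟨hu, by simpa using hv⟩)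
  have hrank : finrank K (span K {u, v}) = finrank K π := by
    rw [hπ, ← Matrix.range_cons_cons_empty, finrank_span_eq_card huv, Fintype.card_fin]
  rwa [eq_of_le_of_finrank_eq hle hrank]

variable {n : ℕ}

def remainder (θ : Fin n → ℝ) : (Fin (n + 1) → ℝ) →ₗ[ℝ] (Fin n → ℝ) where
  toFun v j := θ j * v 0 + v j.succ
  map_add' u v := by ext j; simp only [Pi.add_apply]; ring
  map_smul' c v := by ext j; simp only [Pi.smul_apply, smul_eq_mul, RingHom.id_apply]; ring

@[simp]
lemma remainder_apply (θ : Fin n → ℝ) (v : Fin (n + 1) → ℝ) (j : Fin n) :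
    remainder θ v j = θ j * v 0 + v j.succ := rfl

def minor (j : Fin n) (u v : Fin (n + 1) → ℝ) : ℝ := u 0 * v j.succ - v 0 * u j.succ

lemma minor_eq_remainder (θ : Fin n → ℝ) (j : Fin n) (u v : Fin (n + 1) → ℝ) :
    minor j u v = u 0 * remainder θ v j - v 0 * remainder θ u j := by
  simp only [minor, remainder_apply]; ring

lemma minor_smul_add_smul_right (j : Fin n) (u v : Fin (n + 1) → ℝ) (α β : ℝ) :
    minor j v (α • u + β • v) = -α * minor j u v := by
  simp only [minor, Pi.add_apply, Pi.smul_apply, smul_eq_mul]; ring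

lemma minor_smul_add_smul_left (j : Fin n) (v w : Fin (n + 1) → ℝ) (α β : ℝ) :
    minor j (α • v + β • w) v = -β * minor j v w := by
  simp only [minor, Pi.add_apply, Pi.smul_apply, smul_eq_mul]; ring

/-- `z ν = (M_ν, y_{1,ν}, …, y_{n,ν})`, and `ζ ν = ζ_ν`. -/
structure IsBestApproxSeq (θ : Fin n → ℝ) (z : ℕ → Fin (n + 1) → ℤ) (ζ : ℕ → ℝ) : Prop where
  pos : ∀ ν, 0 < z ν 0
  strictMono : StrictMono fun ν => z ν 0
  strictAnti : StrictAnti ζ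
  le_half : ∀ ν, ζ ν ≤ 1 / 2
  abs_remainder_le : ∀ ν j, |remainder θ ((↑) ∘ z ν) j| ≤ ζ ν
  exists_abs_remainder_eq : ∀ ν, ∃ j, |remainder θ ((↑) ∘ z ν) j| = ζ ν
  exists_le_abs_remainder : ∀ ν (w : Fin (n + 1) → ℤ), w 0 ≠ 0 → |w 0| < z (ν + 1) 0 →
    ∃ j, ζ ν ≤ |remainder θ ((↑) ∘ w) j|

namespace IsBestApproxSeq

variable {θ : Fin n → ℝ} {z : ℕ → Fin (n + 1) → ℤ} {ζ : ℕ → ℝ}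

lemma cast_pos (h : IsBestApproxSeq θ z ζ) (ν : ℕ) : (0 : ℝ) < z ν 0 := by
  exact_mod_cast h.pos ν

lemma cast_lt_succ (h : IsBestApproxSeq θ z ζ) (ν : ℕ) : (z ν 0 : ℝ) < z (ν + 1) 0 := by
  exact_mod_cast h.strictMono ν.lt_succ_self

lemma cast_ne_zero (h : IsBestApproxSeq θ z ζ) (ν : ℕ) : ((↑) ∘ z ν : Fin (n + 1) → ℝ) ≠ 0 :=
  fun h0 => (h.cast_pos ν).ne' (congrFun h0 0)

lemma zeta_pos (h : IsBestApproxSeq θ z ζ) (ν : ℕ) : 0 < ζ ν := by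
  obtain ⟨j, hj⟩ := h.exists_abs_remainder_eq (ν + 1)
  exact (hj ▸ abs_nonneg _).trans_lt (h.strictAnti ν.lt_succ_self)

lemma abs_minor_le (h : IsBestApproxSeq θ z ζ) (ν : ℕ) (j : Fin n) :
    |minor j ((↑) ∘ z ν) ((↑) ∘ z (ν + 1))| ≤ 2 * (ζ ν * z (ν + 1) 0) := by
  have hM := h.cast_pos ν
  have hMM := h.cast_lt_succ ν
  have hr := h.abs_remainder_le ν j
  have hr' := (h.abs_remainder_le (ν + 1) j).trans (h.strictAnti ν.lt_succ_self).le
  rw [minor_eq_remainder θ]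
  simp only [Function.comp_apply] at hr hr' ⊢
  calc _ ≤ |(z ν 0 : ℝ) * remainder θ ((↑) ∘ z (ν + 1)) j|
        + |(z (ν + 1) 0 : ℝ) * remainder θ ((↑) ∘ z ν) j| := abs_sub _ _
    _ ≤ z (ν + 1) 0 * ζ ν + z (ν + 1) 0 * ζ ν := by
      rw [abs_mul, abs_mul, abs_of_pos hM, abs_of_pos (hM.trans hMM)]
      gcongr <;> linarith
    _ = 2 * (ζ ν * z (ν + 1) 0) := by ring

lemma exists_zeta_mul_le_two_mul_abs_minor (h : IsBestApproxSeq θ z ζ) (ν : ℕ) :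
    ∃ j, ζ ν * z (ν + 1) 0 ≤ 2 * |minor j ((↑) ∘ z ν) ((↑) ∘ z (ν + 1))| := by
  have hM := h.cast_pos ν
  have hMM := h.cast_lt_succ ν
  have hζ := h.strictAnti ν.lt_succ_self
  set M : ℝ := (z ν 0 : ℝ)
  set M' : ℝ := (z (ν + 1) 0 : ℝ)
  set r := remainder θ ((↑) ∘ z ν)
  set r' := remainder θ ((↑) ∘ z (ν + 1))
  set S := fun j => minor j ((↑) ∘ z ν) ((↑) ∘ z (ν + 1))
  have hS : ∀ j, S j = M * r' j - M' * r j := fun j => minor_eq_remainder θ j _ _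
  obtain ⟨j₀, hj₀⟩ := h.exists_abs_remainder_eq ν
  have e₀ : M' * ζ ν ≤ M * ζ (ν + 1) + |S j₀| :=
    calc M' * ζ ν = |M * r' j₀ - S j₀| := by
          rw [hS, sub_sub_cancel, abs_mul, abs_of_pos (hM.trans hMM), hj₀]
      _ ≤ |M * r' j₀| + |S j₀| := abs_sub _ _
      _ ≤ M * ζ (ν + 1) + |S j₀| := by
          rw [abs_mul, abs_of_pos hM]
          gcongr
          exact h.abs_remainder_le _ _
  have hw₀ : 0 < (z (ν + 1) - z ν) 0 := by
    simpa using h.strictMono ν.lt_succ_self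
  obtain ⟨j, hj⟩ := h.exists_le_abs_remainder ν (z (ν + 1) - z ν) hw₀.ne'
    (by rw [abs_of_pos hw₀, Pi.sub_apply]; linarith [h.pos ν])
  have hdiff : remainder θ ((↑) ∘ (z (ν + 1) - z ν)) = r' - r := by
    rw [← map_sub]; congr 1; ext i; simp
  have e₁ : M' * ζ ν ≤ (M' - M) * ζ (ν + 1) + |S j| :=
    calc M' * ζ ν ≤ M' * |r' j - r j| := by
          rw [hdiff] at hj
          exact mul_le_mul_of_nonneg_left hj (hM.trans hMM).le
      _ = |M' * (r' j - r j)| := by rw [abs_mul, abs_of_pos (hM.trans hMM)]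
      _ = |(M' - M) * r' j + S j| := by rw [hS]; congr 1; ring
      _ ≤ |(M' - M) * r' j| + |S j| := abs_add_le _ _
      _ ≤ (M' - M) * ζ (ν + 1) + |S j| := by
          rw [abs_mul, abs_of_pos (sub_pos.2 hMM)]
          gcongr
          exact h.abs_remainder_le _ _
  have hsum : M' * ζ ν < |S j| + |S j₀| := by
    nlinarith [mul_lt_mul_of_pos_left hζ (hM.trans hMM)]
  rcases le_total |S j| |S j₀| with hle | hle
  · exact ⟨j₀, by linarith⟩
  · exact ⟨j, by linarith⟩

lemma linearIndependent (h : IsBestApproxSeq θ z ζ) (ν : ℕ) :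
    LinearIndependent ℝ ![((↑) ∘ z ν : Fin (n + 1) → ℝ), (↑) ∘ z (ν + 1)] := by
  refine (LinearIndependent.pair_iff' (h.cast_ne_zero ν)).2 fun t ht => ?_
  have hM := h.cast_pos ν
  have ht₁ : 1 < t := by
    have := congrFun ht 0
    simp only [Pi.smul_apply, Function.comp_apply, smul_eq_mul] at this
    nlinarith [h.cast_lt_succ ν]
  obtain ⟨j, hj⟩ := h.exists_abs_remainder_eq ν
  have hr : remainder θ ((↑) ∘ z (ν + 1)) j = t * remainder θ ((↑) ∘ z ν) j := by
    rw [← ht, map_smul, Pi.smul_apply, smul_eq_mul]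
  have := h.abs_remainder_le (ν + 1) j
  rw [hr, abs_mul, hj, abs_of_pos (by linarith)] at this
  nlinarith [h.strictAnti ν.lt_succ_self, h.zeta_pos ν]

lemma eq_zero_of_abs_le_half (h : IsBestApproxSeq θ z ζ) {ν : ℕ} {α β : ℝ}
    {w : Fin (n + 1) → ℤ} (hα : |α| ≤ 1 / 2) (hβ : |β| ≤ 1 / 2)
    (hw : α • ((↑) ∘ z ν) + β • ((↑) ∘ z (ν + 1)) = ((↑) ∘ w : Fin (n + 1) → ℝ)) :
    α = 0 ∧ β = 0 := by
  have hrem : ∀ j, |remainder θ ((↑) ∘ w) j| < ζ ν := by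
    intro j
    have hr := h.abs_remainder_le ν j
    have hr' := h.abs_remainder_le (ν + 1) j
    rw [← hw, map_add, map_smul, map_smul]
    simp only [Pi.add_apply, Pi.smul_apply, smul_eq_mul]
    calc _ ≤ |α| * |remainder θ ((↑) ∘ z ν) j| + |β| * |remainder θ ((↑) ∘ z (ν + 1)) j| := by
          rw [← abs_mul, ← abs_mul]; exact abs_add_le _ _
      _ ≤ 1 / 2 * ζ ν + 1 / 2 * ζ (ν + 1) := by gcongr
      _ < ζ ν := by linarith [h.strictAnti ν.lt_succ_self]
  have hw₀ : w 0 = 0 := by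
    by_contra hw₀
    suffices |w 0| < z (ν + 1) 0 by
      obtain ⟨j, hj⟩ := h.exists_le_abs_remainder ν w hw₀ this
      exact (hrem j).not_ge hj
    have hM := h.cast_pos ν
    have hMM := h.cast_lt_succ ν
    have h0 := congrFun hw 0
    simp only [Pi.add_apply, Pi.smul_apply, Function.comp_apply, smul_eq_mul] at h0
    have : |(w 0 : ℝ)| < z (ν + 1) 0 := by
      calc |(w 0 : ℝ)| ≤ |α * z ν 0| + |β * z (ν + 1) 0| := h0 ▸ abs_add_le _ _
        _ = |α| * z ν 0 + |β| * z (ν + 1) 0 := by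
            rw [abs_mul, abs_mul, abs_of_pos hM, abs_of_pos (hM.trans hMM)]
        _ ≤ 1 / 2 * z ν 0 + 1 / 2 * z (ν + 1) 0 := by gcongr; linarith
        _ < z (ν + 1) 0 := by linarith
    exact_mod_cast this
  have hw_succ : ∀ j : Fin n, w j.succ = 0 := by
    intro j
    have := (hrem j).trans_le (h.le_half ν)
    simp only [remainder_apply, Function.comp_apply, hw₀, Int.cast_zero, mul_zero,
      zero_add] at this
    have : |(w j.succ : ℝ)| < 1 := this.trans (by norm_num)
    exact Int.abs_lt_one_iff.1 (by exact_mod_cast this)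
  have : α • ((↑) ∘ z ν) + β • ((↑) ∘ z (ν + 1)) = (0 : Fin (n + 1) → ℝ) := by
    rw [hw]; ext i; cases i using Fin.cases <;> simp [hw₀, hw_succ]
  exact LinearIndependent.pair_iff.1 (h.linearIndependent ν) α β this

lemma exists_int_of_smul_add_smul_eq (h : IsBestApproxSeq θ z ζ) {ν : ℕ} {α β : ℝ}
    {w : Fin (n + 1) → ℤ}
    (hw : α • ((↑) ∘ z ν) + β • ((↑) ∘ z (ν + 1)) = ((↑) ∘ w : Fin (n + 1) → ℝ)) :
    (∃ a : ℤ, α = a) ∧ ∃ b : ℤ, β = b := by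
  have hred : (α - round α) • ((↑) ∘ z ν) + (β - round β) • ((↑) ∘ z (ν + 1))
      = ((↑) ∘ (w - round α • z ν - round β • z (ν + 1)) : Fin (n + 1) → ℝ) := by
    ext i
    have := congrFun hw i
    simp only [Pi.add_apply, Pi.sub_apply, Pi.smul_apply, Function.comp_apply,
      smul_eq_mul] at this ⊢
    push_cast
    linarith
  obtain ⟨hα, hβ⟩ := h.eq_zero_of_abs_le_half (abs_sub_round α) (abs_sub_round β) hred
  exact ⟨⟨round α, sub_eq_zero.1 hα⟩, ⟨round β, sub_eq_zero.1 hβ⟩⟩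

lemma abs_minor_le_abs_minor_succ (h : IsBestApproxSeq θ z ζ) {ν : ℕ} (j : Fin n)
    (hmem : ((↑) ∘ z (ν + 2) : Fin (n + 1) → ℝ) ∈ span ℝ {(↑) ∘ z ν, (↑) ∘ z (ν + 1)}) :
    |minor j ((↑) ∘ z ν) ((↑) ∘ z (ν + 1))| ≤ |minor j ((↑) ∘ z (ν + 1)) ((↑) ∘ z (ν + 2))| := by
  obtain ⟨α, β, hαβ⟩ := mem_span_pair.1 hmem
  obtain ⟨⟨a, rfl⟩, -⟩ := h.exists_int_of_smul_add_smul_eq hαβ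
  have ha : a ≠ 0 := by
    rintro rfl
    have := LinearIndependent.pair_iff.1 (h.linearIndependent (ν + 1)) β (-1) (by rw [← hαβ]; simp)
    exact neg_ne_zero.2 one_ne_zero this.2
  rw [← hαβ, minor_smul_add_smul_right, abs_mul, abs_neg]
  exact le_mul_of_one_le_left (abs_nonneg _) (by exact_mod_cast Int.one_le_abs ha)

lemma abs_minor_succ_le_abs_minor (h : IsBestApproxSeq θ z ζ) {ν : ℕ} (j : Fin n)
    (hmem : ((↑) ∘ z ν : Fin (n + 1) → ℝ) ∈ span ℝ {(↑) ∘ z (ν + 1), (↑) ∘ z (ν + 2)}) :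
    |minor j ((↑) ∘ z (ν + 1)) ((↑) ∘ z (ν + 2))| ≤ |minor j ((↑) ∘ z ν) ((↑) ∘ z (ν + 1))| := by
  obtain ⟨α, β, hαβ⟩ := mem_span_pair.1 hmem
  obtain ⟨-, ⟨b, rfl⟩⟩ := h.exists_int_of_smul_add_smul_eq hαβ
  have hb : b ≠ 0 := by
    rintro rfl
    have := LinearIndependent.pair_iff.1 (h.linearIndependent ν) 1 (-α) (by rw [← hαβ]; simp)
    exact one_ne_zero this.1
  rw [← hαβ, minor_smul_add_smul_left, abs_mul, abs_neg]
  exact le_mul_of_one_le_left (abs_nonneg _) (by exact_mod_cast Int.one_le_abs hb)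

lemma abs_minor_succ_eq (h : IsBestApproxSeq θ z ζ) {π : Submodule ℝ (Fin (n + 1) → ℝ)}
    (hπ : finrank ℝ π = 2) {ν : ℕ} (h₀ : (↑) ∘ z ν ∈ π) (h₁ : (↑) ∘ z (ν + 1) ∈ π)
    (h₂ : (↑) ∘ z (ν + 2) ∈ π) (j : Fin n) :
    |minor j ((↑) ∘ z (ν + 1)) ((↑) ∘ z (ν + 2))| = |minor j ((↑) ∘ z ν) ((↑) ∘ z (ν + 1))| :=
  le_antisymm
    (h.abs_minor_succ_le_abs_minor j
      (mem_span_pair_of_finrank_eq_two hπ (h.linearIndependent (ν + 1)) h₁ h₂ h₀))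
    (h.abs_minor_le_abs_minor_succ j
      (mem_span_pair_of_finrank_eq_two hπ (h.linearIndependent ν) h₀ h₁ h₂))

lemma abs_minor_eq_of_forall_mem (h : IsBestApproxSeq θ z ζ)
    {π : Submodule ℝ (Fin (n + 1) → ℝ)} (hπ : finrank ℝ π = 2) {a b : ℕ}
    (hmem : ∀ ν, a ≤ ν → ν ≤ b → (↑) ∘ z ν ∈ π) (j : Fin n) {ν : ℕ} (ha : a ≤ ν)
    (hb : ν + 1 ≤ b) :
    |minor j ((↑) ∘ z ν) ((↑) ∘ z (ν + 1))| = |minor j ((↑) ∘ z a) ((↑) ∘ z (a + 1))| := by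
  induction ν, ha using Nat.le_induction with
  | base => rfl
  | succ ν ha ih =>
    rw [h.abs_minor_succ_eq hπ (hmem ν ha (by omega)) (hmem (ν + 1) (by omega) (by omega))
      (hmem (ν + 2) (by omega) hb), ih (by omega)]

lemma zeta_mul_le_four_mul_of_forall_mem (h : IsBestApproxSeq θ z ζ)
    {π : Submodule ℝ (Fin (n + 1) → ℝ)} (hπ : finrank ℝ π = 2) {a b : ℕ}
    (hmem : ∀ ν, a ≤ ν → ν ≤ b → (↑) ∘ z ν ∈ π) {μ ν : ℕ} (haμ : a ≤ μ) (hμb : μ + 1 ≤ b)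
    (haν : a ≤ ν) (hνb : ν + 1 ≤ b) :
    ζ μ * z (μ + 1) 0 ≤ 4 * (ζ ν * z (ν + 1) 0) := by
  obtain ⟨j, hj⟩ := h.exists_zeta_mul_le_two_mul_abs_minor μ
  linarith [h.abs_minor_eq_of_forall_mem hπ hmem j haμ hμb,
    h.abs_minor_eq_of_forall_mem hπ hmem j haν hνb, h.abs_minor_le ν j]

lemma of_nid [NeZero n] {M : ℕ → ℤ} {y : ℕ → Fin n → ℤ} (hMpos : ∀ ν, 0 < M ν)
    (hMmono : StrictMono M) (hζ : ∀ ν, ζ ν = ⨆ j : Fin n, nid (θ j * (M ν : ℝ)))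
    (hζanti : StrictAnti ζ)
    (hbest : ∀ (ν : ℕ) (x : ℤ), x ≠ 0 → |x| < M (ν + 1) →
      ζ ν ≤ ⨆ j : Fin n, nid (θ j * (x : ℝ)))
    (hy : ∀ ν j, nid (θ j * (M ν : ℝ)) = |θ j * (M ν : ℝ) + (y ν j : ℝ)|) :
    IsBestApproxSeq θ (fun ν => Fin.cons (M ν) (y ν)) ζ where
  pos := hMpos
  strictMono := hMmono
  strictAnti := hζanti
  le_half ν := (hζ ν).trans_le (ciSup_le fun _ => abs_sub_round _)
  abs_remainder_le ν j := by
    simpa [← hy, hζ] using le_ciSup (Finite.bddAbove_range fun j => nid (θ j * (M ν : ℝ))) j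
  exists_abs_remainder_eq ν := by
    obtain ⟨j, hj⟩ := exists_eq_ciSup_of_finite (f := fun j => nid (θ j * (M ν : ℝ)))
    exact ⟨j, by simpa [← hy, hζ] using hj⟩
  exists_le_abs_remainder ν w hw hlt := by
    obtain ⟨j, hj⟩ := exists_eq_ciSup_of_finite (f := fun j => nid (θ j * (w 0 : ℝ)))
    exact ⟨j, (hbest ν (w 0) hw hlt).trans (hj ▸ nid_le_abs_add_int _ _)⟩

end IsBestApproxSeq

end SimultaneousApprox

theorem lemma1_best_approx_in_plane_general (θ : Fin 3 → ℝ)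
    (M : ℕ → ℤ) (y : ℕ → Fin 3 → ℤ) (ζ : ℕ → ℝ)
    (hMpos : ∀ ν, 0 < M ν)
    (hMmono : StrictMono M)
    (hζ : ∀ ν, ζ ν = ⨆ j : Fin 3, nid (θ j * (M ν : ℝ)))
    (hζanti : StrictAnti ζ)
    (hbest : ∀ (ν : ℕ) (x : ℤ), x ≠ 0 → |x| < M (ν + 1) →
      ζ ν ≤ ⨆ j : Fin 3, nid (θ j * (x : ℝ)))
    (hy : ∀ ν j, nid (θ j * (M ν : ℝ)) = |θ j * (M ν : ℝ) + (y ν j : ℝ)|) :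
    ∃ c C : ℝ, 0 < c ∧ c ≤ C ∧
      ∀ (a b : ℕ) (π : Submodule ℝ (Fin 4 → ℝ)), a ≤ b → Module.finrank ℝ π = 2 →
        (∀ ν, a ≤ ν → ν ≤ b →
          (![(M ν : ℝ), (y ν 0 : ℝ), (y ν 1 : ℝ), (y ν 2 : ℝ)] : Fin 4 → ℝ) ∈ π) →
        ∀ ν₁ ν₂ : ℕ, a ≤ ν₁ → ν₁ + 1 ≤ b → a ≤ ν₂ → ν₂ + 1 ≤ b →
          c * (ζ ν₂ * (M (ν₂ + 1) : ℝ)) ≤ ζ ν₁ * (M (ν₁ + 1) : ℝ) ∧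
            ζ ν₁ * (M (ν₁ + 1) : ℝ) ≤ C * (ζ ν₂ * (M (ν₂ + 1) : ℝ)) := by
  have h := SimultaneousApprox.IsBestApproxSeq.of_nid hMpos hMmono hζ hζanti hbest hy
  refine ⟨1 / 4, 4, by norm_num, by norm_num, fun a b π _ hπ hmem ν₁ ν₂ ha₁ hb₁ ha₂ hb₂ => ?_⟩
  have hmem' : ∀ ν, a ≤ ν → ν ≤ b → (↑) ∘ Fin.cons (M ν) (y ν) ∈ π := fun ν ha hb => by
    convert hmem ν ha hb using 1
    ext i; fin_cases i <;> rfl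
  have h₁₂ : ζ ν₁ * (M (ν₁ + 1) : ℝ) ≤ 4 * (ζ ν₂ * M (ν₂ + 1)) :=
    h.zeta_mul_le_four_mul_of_forall_mem hπ hmem' ha₁ hb₁ ha₂ hb₂
  have h₂₁ : ζ ν₂ * (M (ν₂ + 1) : ℝ) ≤ 4 * (ζ ν₁ * M (ν₁ + 1)) :=
    h.zeta_mul_le_four_mul_of_forall_mem hπ hmem' ha₂ hb₂ ha₁ hb₁
  constructor <;> linarith

/-- **Lemma 1.** Let `1, θ₁, θ₂, θ₃` be linearly independent over `ℚ`, and let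
`M₁ < M₂ < …` be the sequence of (positive) best approximations for simultaneous
approximation to `θ₁, θ₂, θ₃`, with `ζ_ν = max_j ‖θ_j M_ν‖` and
`z_ν = (M_ν, y_{1,ν}, y_{2,ν}, y_{3,ν}) ∈ ℤ⁴` the associated integer vectors.
There are constants `C ≥ c > 0`, depending only on `θ`, such that whenever all the
vectors `z_ν` with `a ≤ ν ≤ b` lie in a common two-dimensional linear subspace `π ⊆ ℝ⁴`,
one has `ζ_{ν₁} M_{ν₁+1} ≍ ζ_{ν₂} M_{ν₂+1}` for all `a ≤ ν₁, ν₂ ≤ b − 1`. -/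
theorem lemma1_best_approx_in_plane (θ : Fin 3 → ℝ)
    (hli : LinearIndependent ℚ ![(1 : ℝ), θ 0, θ 1, θ 2])
    (M : ℕ → ℤ) (y : ℕ → Fin 3 → ℤ) (ζ : ℕ → ℝ)
    (hMpos : ∀ ν, 0 < M ν)
    (hMmono : StrictMono M)
    (hζ : ∀ ν, ζ ν = ⨆ j : Fin 3, nid (θ j * (M ν : ℝ)))
    (hζanti : StrictAnti ζ)
    (hbest : ∀ (ν : ℕ) (x : ℤ), x ≠ 0 → |x| < M (ν + 1) →
      ζ ν ≤ ⨆ j : Fin 3, nid (θ j * (x : ℝ)))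
    (hy : ∀ ν j, nid (θ j * (M ν : ℝ)) = |θ j * (M ν : ℝ) + (y ν j : ℝ)|) :
    ∃ c C : ℝ, 0 < c ∧ c ≤ C ∧
      ∀ (a b : ℕ) (π : Submodule ℝ (Fin 4 → ℝ)), a ≤ b → Module.finrank ℝ π = 2 →
        (∀ ν, a ≤ ν → ν ≤ b →
          (![(M ν : ℝ), (y ν 0 : ℝ), (y ν 1 : ℝ), (y ν 2 : ℝ)] : Fin 4 → ℝ) ∈ π) →
        ∀ ν₁ ν₂ : ℕ, a ≤ ν₁ → ν₁ + 1 ≤ b → a ≤ ν₂ → ν₂ + 1 ≤ b →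
          c * (ζ ν₂ * (M (ν₂ + 1) : ℝ)) ≤ ζ ν₁ * (M (ν₁ + 1) : ℝ) ∧
            ζ ν₁ * (M (ν₁ + 1) : ℝ) ≤ C * (ζ ν₂ * (M (ν₂ + 1) : ℝ)) :=
  lemma1_best_approx_in_plane_general θ M y ζ hMpos hMmono hζ hζanti hbest hy
end

section
/- (Lemma 2) Let θ¹, θ², θ³ be real numbers such that 1, θ¹, θ², θ³ are linearly independent over ℚ. Then there exist constants C ≥ c > 0, depending only on (θ¹, θ², θ³), with the following property. Whenever a ≤ b are indices such that all the vectors z_ν, for a ≤ ν ≤ b, lie in a common two-dimensional linear subspace π of ℝ⁴, one has c·ζ_{ν₂}·M_{ν₂+1} ≤ ζ_{ν₁}·M_{ν₁+1} ≤ C·ζ_{ν₂}·M_{ν₂+1} for all ν₁, ν₂ with a ≤ ν₁, ν₂ ≤ b − 1. -/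
open Module Submodule

theorem span_pair_eq_of_finrank_eq_two {K V : Type*} [DivisionRing K] [AddCommGroup V]
    [Module K V] {π : Submodule K V} (hπ : finrank K π = 2) {u v : V} (hu : u ∈ π) (hv : v ∈ π)
    (huv : LinearIndependent K ![u, v]) : span K {u, v} = π := by
  have : FiniteDimensional K π := Module.finite_of_finrank_pos (by omega)
  refine eq_of_le_of_finrank_eq (span_le.2 (Set.insert_subset_iff.2 ⟨hu, by simpa using hv⟩)) ?_
  rw [hπ, ← Matrix.range_cons_cons_empty u v ![], finrank_span_eq_card huv, Fintype.card_fin]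

section

variable {V E : Type*} [AddCommGroup V] [Module ℝ V] [SeminormedAddCommGroup E] [NormedSpace ℝ E]

theorem norm_map_smul_add_smul_le (f : V →ₗ[ℝ] E) (s t : ℝ) (u v : V) :
    ‖f (s • u + t • v)‖ ≤ |s| * ‖f u‖ + |t| * ‖f v‖ := by
  simpa only [map_add, map_smul, norm_smul, Real.norm_eq_abs] using
    norm_add_le (s • f u) (t • f v)

theorem abs_map_smul_add_smul_le (g : V →ₗ[ℝ] ℝ) (s t : ℝ) (u v : V) :
    |g (s • u + t • v)| ≤ |s| * |g u| + |t| * |g v| := by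
  simpa only [Real.norm_eq_abs] using norm_map_smul_add_smul_le g s t u v

theorem linearIndependent_pair_of_norm_lt {F : Type*} [SeminormedAddCommGroup F]
    [NormedSpace ℝ F] (f : V →ₗ[ℝ] E) (g : V →ₗ[ℝ] F) {u v : V} (hf : ‖f u‖ < ‖f v‖)
    (hg : ‖g v‖ < ‖g u‖) :
    LinearIndependent ℝ ![u, v] := by
  refine LinearIndependent.pair_iff.2 fun s t hst => ?_
  have hv : t • v = -(s • u) := eq_neg_of_add_eq_zero_right hst
  have hf' : |t| * ‖f v‖ = |s| * ‖f u‖ := by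
    simpa only [map_neg, map_smul, norm_neg, norm_smul, Real.norm_eq_abs] using congrArg (‖f ·‖) hv
  have hg' : |t| * ‖g v‖ = |s| * ‖g u‖ := by
    simpa only [map_neg, map_smul, norm_neg, norm_smul, Real.norm_eq_abs] using congrArg (‖g ·‖) hv
  have hfu := norm_nonneg (f u)
  have hgv := norm_nonneg (g v)
  suffices |s| = 0 ∧ |t| = 0 by simpa only [abs_eq_zero] using this
  rcases le_total |s| |t| with h | h
  · have : |t| = 0 := by nlinarith [abs_nonneg s]
    exact ⟨by linarith [abs_nonneg s], this⟩
  · have : |s| = 0 := by nlinarith [abs_nonneg t]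
    exact ⟨this, by linarith [abs_nonneg t]⟩

end

/-- `z` behaves like a sequence of best approximations: `‖f ·‖` is the height and `|g ·|` the
approximation error. For the theorem, `Λ = ℤ⁴`, `f (x, y) = x` and `g (x, y) = L(x) + y`. -/
structure IsBestApproxSeq {V E : Type*} [AddCommGroup V] [Module ℝ V] [SeminormedAddCommGroup E]
    [Module ℝ E] (Λ : AddSubgroup V) (f : V →ₗ[ℝ] E) (g : V →ₗ[ℝ] ℝ) (z : ℕ → V) : Prop where
  mem : ∀ ν, z ν ∈ Λ
  norm_lt_succ : ∀ ν, ‖f (z ν)‖ < ‖f (z (ν + 1))‖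
  abs_succ_lt : ∀ ν, |g (z (ν + 1))| < |g (z ν)|
  eq_zero_of_lt : ∀ ν, ∀ u ∈ Λ, ‖f u‖ < ‖f (z (ν + 1))‖ → |g u| < |g (z ν)| → u = 0

/-- The interior product of `g` with `u ∧ v`. -/
def wedge {V : Type*} [AddCommGroup V] [Module ℝ V] (g : V →ₗ[ℝ] ℝ) (u v : V) : V :=
  g u • v - g v • u

theorem wedge_smul_add_smul_right {V : Type*} [AddCommGroup V] [Module ℝ V] (g : V →ₗ[ℝ] ℝ)
    (u v : V) (a b : ℝ) : wedge g v (a • u + b • v) = -a • wedge g u v := by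
  simp only [wedge, map_add, map_smul, smul_eq_mul]
  module

namespace IsBestApproxSeq

variable {V E : Type*} [AddCommGroup V] [Module ℝ V] [SeminormedAddCommGroup E] [NormedSpace ℝ E]
  {Λ : AddSubgroup V} {f : V →ₗ[ℝ] E} {g : V →ₗ[ℝ] ℝ} {z : ℕ → V}

theorem linearIndependent (h : IsBestApproxSeq Λ f g z) (ν : ℕ) :
    LinearIndependent ℝ ![z ν, z (ν + 1)] :=
  linearIndependent_pair_of_norm_lt f g (h.norm_lt_succ ν) (by
    simpa only [Real.norm_eq_abs] using h.abs_succ_lt ν)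

theorem eq_zero_of_smul_add_smul_mem (h : IsBestApproxSeq Λ f g z) {ν : ℕ} {s t : ℝ}
    (hmem : s • z ν + t • z (ν + 1) ∈ Λ) (hf : ‖f (s • z ν + t • z (ν + 1))‖ < ‖f (z (ν + 1))‖)
    (hg : |g (s • z ν + t • z (ν + 1))| < |g (z ν)|) : s = 0 ∧ t = 0 :=
  LinearIndependent.pair_iff.1 (h.linearIndependent ν) s t (h.eq_zero_of_lt ν _ hmem hf hg)

/-- `z ν` and `z (ν + 1)` form a basis of the lattice `Λ ∩ span {z ν, z (ν + 1)}`. -/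
theorem exists_int_of_smul_add_smul_mem (h : IsBestApproxSeq Λ f g z) {ν : ℕ} {α β : ℝ}
    (hmem : α • z ν + β • z (ν + 1) ∈ Λ) : (∃ m : ℤ, (m : ℝ) = α) ∧ ∃ n : ℤ, (n : ℝ) = β := by
  set s := α - round α
  set t := β - round β
  have hst : s • z ν + t • z (ν + 1) =
      α • z ν + β • z (ν + 1) - round α • z ν - round β • z (ν + 1) := by
    simp only [s, t, sub_smul, Int.cast_smul_eq_zsmul]
    abel
  have hf := norm_map_smul_add_smul_le f s t (z ν) (z (ν + 1))
  have hg := abs_map_smul_add_smul_le g s t (z ν) (z (ν + 1))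
  have hs : |s| ≤ 1 / 2 := abs_sub_round α
  have ht : |t| ≤ 1 / 2 := abs_sub_round β
  have := h.norm_lt_succ ν
  have := h.abs_succ_lt ν
  obtain ⟨hs0, ht0⟩ := h.eq_zero_of_smul_add_smul_mem
    (by rw [hst]; exact sub_mem (sub_mem hmem (zsmul_mem (h.mem ν) _)) (zsmul_mem (h.mem _) _))
    (by nlinarith [norm_nonneg (f (z ν)), norm_nonneg (f (z (ν + 1)))])
    (by nlinarith [abs_nonneg (g (z ν)), abs_nonneg (g (z (ν + 1)))])
  exact ⟨⟨round α, by linarith⟩, ⟨round β, by linarith⟩⟩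

theorem norm_wedge_le (h : IsBestApproxSeq Λ f g z) (ν : ℕ) :
    ‖f (wedge g (z ν) (z (ν + 1)))‖ ≤ 2 * (|g (z ν)| * ‖f (z (ν + 1))‖) := by
  have hle : ‖f (wedge g (z ν) (z (ν + 1)))‖ ≤
      |g (z ν)| * ‖f (z (ν + 1))‖ + |g (z (ν + 1))| * ‖f (z ν)‖ := by
    simpa only [wedge, map_sub, map_smul, norm_smul, Real.norm_eq_abs] using
      norm_sub_le (g (z ν) • f (z (ν + 1))) (g (z (ν + 1)) • f (z ν))
  have := h.norm_lt_succ ν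
  have := h.abs_succ_lt ν
  nlinarith [norm_nonneg (f (z ν)), abs_nonneg (g (z (ν + 1)))]

theorem le_norm_wedge (h : IsBestApproxSeq Λ f g z) (ν : ℕ) :
    |g (z ν)| * ‖f (z (ν + 1))‖ ≤ 8 * ‖f (wedge g (z ν) (z (ν + 1)))‖ := by
  have hlt := h.abs_succ_lt ν
  have hη : g (z ν) ≠ 0 := abs_pos.1 ((abs_nonneg _).trans_lt hlt)
  set r := g (z (ν + 1)) / g (z ν)
  set m : ℤ := -round (2 * r)
  have hm : |(m : ℝ) + 2 * r| ≤ 1 / 2 := by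
    simpa only [m, Int.cast_neg, neg_add_eq_sub] using abs_sub_round (2 * r)
  -- Rounding `2r` makes the `g`-value small; the `f`-size is controlled by the wedge.
  have hcomb : (m : ℝ) • z ν + (2 : ℝ) • z (ν + 1) =
      ((m : ℝ) + 2 * r) • z ν + (2 / g (z ν)) • wedge g (z ν) (z (ν + 1)) := by
    simp only [wedge, smul_sub, smul_smul, r]
    rw [div_mul_cancel₀ _ hη, mul_comm (2 / g (z ν)), ← mul_div_assoc, mul_comm]
    module
  have hg : g ((m : ℝ) • z ν + (2 : ℝ) • z (ν + 1)) = ((m : ℝ) + 2 * r) * g (z ν) := by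
    simp only [map_add, map_smul, smul_eq_mul, r]
    field_simp
  by_contra! hW
  have hf : ‖f ((m : ℝ) • z ν + (2 : ℝ) • z (ν + 1))‖ < ‖f (z (ν + 1))‖ := by
    rw [hcomb]
    refine (norm_map_smul_add_smul_le f _ _ _ _).trans_lt ?_
    rw [abs_div, abs_two, div_mul_eq_mul_div]
    have hW' : 2 * ‖f (wedge g (z ν) (z (ν + 1)))‖ / |g (z ν)| < ‖f (z (ν + 1))‖ / 4 := by
      rw [div_lt_iff₀ (abs_pos.2 hη)]
      linarith
    have := h.norm_lt_succ ν
    nlinarith [norm_nonneg (f (z ν))]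
  have hmem : (m : ℝ) • z ν + (2 : ℝ) • z (ν + 1) ∈ Λ := by
    rw [Int.cast_smul_eq_zsmul, ← Int.cast_two, Int.cast_smul_eq_zsmul]
    exact add_mem (zsmul_mem (h.mem ν) m) (zsmul_mem (h.mem (ν + 1)) 2)
  have := (h.eq_zero_of_smul_add_smul_mem hmem hf (by
    rw [hg, abs_mul]; nlinarith [abs_pos.2 hη])).2
  norm_num at this

/-- Both `(z ν, z (ν + 1))` and `(z (ν + 1), z (ν + 2))` are bases of the same lattice, so the
change of basis is unimodular. -/
theorem norm_wedge_succ (h : IsBestApproxSeq Λ f g z) {ν : ℕ}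
    (hspan : z (ν + 2) ∈ span ℝ {z ν, z (ν + 1)}) :
    ‖f (wedge g (z (ν + 1)) (z (ν + 2)))‖ = ‖f (wedge g (z ν) (z (ν + 1)))‖ := by
  obtain ⟨α, β, hαβ⟩ := mem_span_pair.1 hspan
  obtain ⟨⟨m, hm⟩, -⟩ := h.exists_int_of_smul_add_smul_mem (hαβ ▸ h.mem (ν + 2))
  have hα : α ≠ 0 := by
    rintro rfl
    have := LinearIndependent.pair_iff.1 (h.linearIndependent (ν + 1)) β (-1)
      (by rw [show ν + 1 + 1 = ν + 2 from rfl, ← hαβ]; module)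
    norm_num at this
  have hinv : (-(β / α)) • z (ν + 1) + α⁻¹ • z (ν + 1 + 1) = z ν := by
    rw [show ν + 1 + 1 = ν + 2 from rfl, ← hαβ, smul_add, smul_smul, smul_smul,
      inv_mul_cancel₀ hα, one_smul, div_eq_inv_mul]
    module
  obtain ⟨-, n, hn⟩ := h.exists_int_of_smul_add_smul_mem (hinv ▸ h.mem ν)
  have hmn : m * n = 1 := by
    exact_mod_cast (show (m : ℝ) * n = 1 by rw [hm, hn, mul_inv_cancel₀ hα])
  have habs : |α| = 1 := by
    rcases Int.eq_one_or_neg_one_of_mul_eq_one hmn with rfl | rfl <;> simp [← hm]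
  rw [← hαβ, wedge_smul_add_smul_right, map_smul, norm_smul, Real.norm_eq_abs, abs_neg, habs,
    one_mul]

theorem norm_wedge_eq_of_mem (h : IsBestApproxSeq Λ f g z) {π : Submodule ℝ V}
    (hπ : finrank ℝ π = 2) {a b : ℕ} (hmem : ∀ ν, a ≤ ν → ν ≤ b → z ν ∈ π) {ν : ℕ}
    (haν : a ≤ ν) (hνb : ν + 1 ≤ b) :
    ‖f (wedge g (z ν) (z (ν + 1)))‖ = ‖f (wedge g (z a) (z (a + 1)))‖ := by
  induction ν, haν using Nat.le_induction with
  | base => rfl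
  | succ ν haν ih =>
    rw [← ih (by omega)]
    refine h.norm_wedge_succ ?_
    rw [span_pair_eq_of_finrank_eq_two hπ (hmem ν haν (by omega))
      (hmem (ν + 1) (by omega) (by omega)) (h.linearIndependent ν)]
    exact hmem (ν + 2) (by omega) hνb

theorem abs_mul_norm_le_of_mem (h : IsBestApproxSeq Λ f g z) {π : Submodule ℝ V}
    (hπ : finrank ℝ π = 2) {a b : ℕ} (hmem : ∀ ν, a ≤ ν → ν ≤ b → z ν ∈ π) {μ₁ μ₂ : ℕ}
    (ha₁ : a ≤ μ₁) (hb₁ : μ₁ + 1 ≤ b) (ha₂ : a ≤ μ₂) (hb₂ : μ₂ + 1 ≤ b) :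
    |g (z μ₁)| * ‖f (z (μ₁ + 1))‖ ≤ 16 * (|g (z μ₂)| * ‖f (z (μ₂ + 1))‖) :=
  calc |g (z μ₁)| * ‖f (z (μ₁ + 1))‖ ≤ 8 * ‖f (wedge g (z μ₁) (z (μ₁ + 1)))‖ :=
        h.le_norm_wedge μ₁
    _ = 8 * ‖f (wedge g (z μ₂) (z (μ₂ + 1)))‖ := by
        rw [h.norm_wedge_eq_of_mem hπ hmem ha₁ hb₁, h.norm_wedge_eq_of_mem hπ hmem ha₂ hb₂]
    _ ≤ 16 * (|g (z μ₂)| * ‖f (z (μ₂ + 1))‖) := by linarith [h.norm_wedge_le μ₂]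

end IsBestApproxSeq

theorem norm_intCast_eq_heightM {m : ℕ} (w : Fin m → ℤ) : ‖fun i => (w i : ℝ)‖ = heightM w := by
  have : ‖fun i => (w i : ℝ)‖₊ = heightM w := by
    simp only [Pi.nnnorm_def, heightM, Nat.cast_finsetSup, NNReal.natCast_natAbs]
    rfl
  rw [← coe_nnnorm, this, NNReal.coe_natCast]

theorem nid_le_abs_add_intCast (t : ℝ) (k : ℤ) : nid t ≤ |t + k| := by
  simpa [nid] using round_le t (-k)

def intPoints (ι : Type*) : AddSubgroup (ι → ℝ) :=
  AddSubgroup.pi Set.univ fun _ => (Int.castAddHom ℝ).range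

def formL (θ : Fin 3 → ℝ) : (Fin 4 → ℝ) →ₗ[ℝ] ℝ :=
  ∑ i : Fin 3, θ i • LinearMap.proj i.castSucc + LinearMap.proj (Fin.last 3)

def intVec (w : Fin 3 → ℤ) (k : ℤ) : Fin 4 → ℝ := ![(w 0 : ℝ), (w 1 : ℝ), (w 2 : ℝ), (k : ℝ)]

theorem intVec_mem_intPoints (w : Fin 3 → ℤ) (k : ℤ) : intVec w k ∈ intPoints (Fin 4) := by
  simp only [intPoints, AddSubgroup.mem_pi, Set.mem_univ, forall_const, AddMonoidHom.mem_range]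
  intro i; fin_cases i
  exacts [⟨w 0, rfl⟩, ⟨w 1, rfl⟩, ⟨w 2, rfl⟩, ⟨k, rfl⟩]

theorem exists_eq_intVec_of_mem {u : Fin 4 → ℝ} (hu : u ∈ intPoints (Fin 4)) :
    ∃ w k, u = intVec w k := by
  simp only [intPoints, AddSubgroup.mem_pi, Set.mem_univ, forall_const,
    AddMonoidHom.mem_range] at hu
  choose p hp using hu
  refine ⟨fun i => p i.castSucc, p (Fin.last 3), ?_⟩
  ext i; fin_cases i <;> simp [intVec, ← hp]

theorem norm_funLeft_castSucc_intVec (w : Fin 3 → ℤ) (k : ℤ) :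
    ‖LinearMap.funLeft ℝ ℝ Fin.castSucc (intVec w k)‖ = heightM w := by
  rw [← norm_intCast_eq_heightM]
  congr 1
  ext i; fin_cases i <;> rfl

theorem formL_intVec (θ : Fin 3 → ℝ) (w : Fin 3 → ℤ) (k : ℤ) :
    formL θ (intVec w k) = ∑ i, θ i * (w i : ℝ) + k := by
  simp [formL, intVec, Fin.sum_univ_three]

theorem isBestApproxSeq_intVec {θ : Fin 3 → ℝ} {x : ℕ → Fin 3 → ℤ} {y : ℕ → ℤ}
    (hM : StrictMono fun ν => heightM (x ν))
    (hanti : StrictAnti fun ν => nid (∑ i, θ i * (x ν i : ℝ)))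
    (hbest : ∀ (ν : ℕ) (w : Fin 3 → ℤ), w ≠ 0 → heightM w < heightM (x (ν + 1)) →
      nid (∑ i, θ i * (x ν i : ℝ)) ≤ nid (∑ i, θ i * (w i : ℝ)))
    (hy : ∀ ν, nid (∑ i, θ i * (x ν i : ℝ)) = |∑ i, θ i * (x ν i : ℝ) + y ν|) :
    IsBestApproxSeq (intPoints (Fin 4)) (LinearMap.funLeft ℝ ℝ Fin.castSucc) (formL θ)
      fun ν => intVec (x ν) (y ν) := by
  have hform (ν : ℕ) : |formL θ (intVec (x ν) (y ν))| = nid (∑ i, θ i * (x ν i : ℝ)) := by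
    rw [formL_intVec, hy]
  refine ⟨fun ν => intVec_mem_intPoints _ _, fun ν => ?_, fun ν => ?_, fun ν u hu hf hg => ?_⟩
  · simpa only [norm_funLeft_castSucc_intVec, Nat.cast_lt] using hM (Nat.lt_succ_self ν)
  · simpa only [hform] using hanti (Nat.lt_succ_self ν)
  obtain ⟨w, k, rfl⟩ := exists_eq_intVec_of_mem hu
  rw [norm_funLeft_castSucc_intVec, norm_funLeft_castSucc_intVec, Nat.cast_lt] at hf
  rw [hform, formL_intVec] at hg
  obtain rfl : w = 0 := by
    by_contra hw
    exact (hbest ν w hw hf).not_gt (hg.trans_le' (nid_le_abs_add_intCast _ k))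
  obtain rfl : k = 0 := by
    have hk : |(k : ℝ)| < 1 := by
      simpa using hg.trans_le ((abs_sub_round _).trans (by norm_num))
    rw [← Int.cast_abs, ← Int.cast_one, Int.cast_lt, Int.abs_lt_one_iff] at hk
    exact hk
  ext i; fin_cases i <;> simp [intVec]

theorem lemma2_best_approx_in_plane_general (θ : Fin 3 → ℝ)
    (x : ℕ → Fin 3 → ℤ) (y : ℕ → ℤ) (ζ : ℕ → ℝ)
    (hMmono : StrictMono fun ν => heightM (x ν))
    (hζ : ∀ ν, ζ ν = nid (∑ i : Fin 3, θ i * (x ν i : ℝ)))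
    (hζanti : StrictAnti ζ)
    (hbest : ∀ (ν : ℕ) (w : Fin 3 → ℤ), w ≠ 0 → heightM w < heightM (x (ν + 1)) →
      ζ ν ≤ nid (∑ i : Fin 3, θ i * (w i : ℝ)))
    (hy : ∀ ν, nid (∑ i : Fin 3, θ i * (x ν i : ℝ)) =
      |(∑ i : Fin 3, θ i * (x ν i : ℝ)) + (y ν : ℝ)|) :
    ∃ c C : ℝ, 0 < c ∧ c ≤ C ∧
      ∀ (a b : ℕ) (π : Submodule ℝ (Fin 4 → ℝ)), a ≤ b → Module.finrank ℝ π = 2 →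
        (∀ ν, a ≤ ν → ν ≤ b →
          (![(x ν 0 : ℝ), (x ν 1 : ℝ), (x ν 2 : ℝ), (y ν : ℝ)] : Fin 4 → ℝ) ∈ π) →
        ∀ ν₁ ν₂ : ℕ, a ≤ ν₁ → ν₁ + 1 ≤ b → a ≤ ν₂ → ν₂ + 1 ≤ b →
          c * (ζ ν₂ * (heightM (x (ν₂ + 1)) : ℝ)) ≤ ζ ν₁ * (heightM (x (ν₁ + 1)) : ℝ) ∧
            ζ ν₁ * (heightM (x (ν₁ + 1)) : ℝ) ≤
              C * (ζ ν₂ * (heightM (x (ν₂ + 1)) : ℝ)) := by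
  obtain rfl : ζ = fun ν => nid (∑ i : Fin 3, θ i * (x ν i : ℝ)) := funext hζ
  have hz := isBestApproxSeq_intVec hMmono hζanti hbest hy
  have hval (ν : ℕ) : nid (∑ i, θ i * (x ν i : ℝ)) * heightM (x (ν + 1)) =
      |formL θ (intVec (x ν) (y ν))| *
        ‖LinearMap.funLeft ℝ ℝ Fin.castSucc (intVec (x (ν + 1)) (y (ν + 1)))‖ := by
    rw [formL_intVec, ← hy, norm_funLeft_castSucc_intVec]
  refine ⟨1 / 16, 16, by norm_num, by norm_num, fun a b π _ hπ hmem ν₁ ν₂ ha₁ hb₁ ha₂ hb₂ => ?_⟩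
  simp only [hval]
  have h₁₂ := hz.abs_mul_norm_le_of_mem hπ hmem ha₁ hb₁ ha₂ hb₂
  have h₂₁ := hz.abs_mul_norm_le_of_mem hπ hmem ha₂ hb₂ ha₁ hb₁
  constructor <;> linarith

/-- **Lemma 2.** Let `1, θ¹, θ², θ³` be linearly independent over `ℚ`, and let
`x_1, x_2, …` be the sequence of best approximations for the linear form
`L(x) = θ¹x₁ + θ²x₂ + θ³x₃`, with heights `M_ν = M(x_ν)` strictly increasing, values
`ζ_ν = ‖L(x_ν)‖` strictly decreasing, and `z_ν = (x_{1,ν}, x_{2,ν}, x_{3,ν}, y_ν) ∈ ℤ⁴`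
the associated integer vectors. There are constants `C ≥ c > 0`, depending only on `θ`,
such that whenever all the vectors `z_ν` with `a ≤ ν ≤ b` lie in a common two-dimensional
linear subspace `π ⊆ ℝ⁴`, one has `ζ_{ν₁} M_{ν₁+1} ≍ ζ_{ν₂} M_{ν₂+1}` for all
`a ≤ ν₁, ν₂ ≤ b − 1`. -/
theorem lemma2_best_approx_in_plane (θ : Fin 3 → ℝ)
    (hli : LinearIndependent ℚ ![(1 : ℝ), θ 0, θ 1, θ 2])
    (x : ℕ → Fin 3 → ℤ) (y : ℕ → ℤ) (ζ : ℕ → ℝ)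
    (hx0 : ∀ ν, x ν ≠ 0)
    (hMmono : StrictMono fun ν => heightM (x ν))
    (hζ : ∀ ν, ζ ν = nid (∑ i : Fin 3, θ i * (x ν i : ℝ)))
    (hζanti : StrictAnti ζ)
    (hbest : ∀ (ν : ℕ) (w : Fin 3 → ℤ), w ≠ 0 → heightM w < heightM (x (ν + 1)) →
      ζ ν ≤ nid (∑ i : Fin 3, θ i * (w i : ℝ)))
    (hy : ∀ ν, nid (∑ i : Fin 3, θ i * (x ν i : ℝ)) =
      |(∑ i : Fin 3, θ i * (x ν i : ℝ)) + (y ν : ℝ)|) :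
    ∃ c C : ℝ, 0 < c ∧ c ≤ C ∧
      ∀ (a b : ℕ) (π : Submodule ℝ (Fin 4 → ℝ)), a ≤ b → Module.finrank ℝ π = 2 →
        (∀ ν, a ≤ ν → ν ≤ b →
          (![(x ν 0 : ℝ), (x ν 1 : ℝ), (x ν 2 : ℝ), (y ν : ℝ)] : Fin 4 → ℝ) ∈ π) →
        ∀ ν₁ ν₂ : ℕ, a ≤ ν₁ → ν₁ + 1 ≤ b → a ≤ ν₂ → ν₂ + 1 ≤ b →
          c * (ζ ν₂ * (heightM (x (ν₂ + 1)) : ℝ)) ≤ ζ ν₁ * (heightM (x (ν₁ + 1)) : ℝ) ∧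
            ζ ν₁ * (heightM (x (ν₁ + 1)) : ℝ) ≤
              C * (ζ ν₂ * (heightM (x (ν₂ + 1)) : ℝ)) :=
  lemma2_best_approx_in_plane_general θ x y ζ hMmono hζ hζanti hbest hy
end
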